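/- arXiv:1209.5866 — 6 statements merged into one kernel-verified Lean document; each statement's English description precedes it below -/
import Mathlib

section
/- Let (X,d) be a metric space, f : X → [0,∞) a continuous function, x ∈ X a point, and δ > 0. If the closed ball of radius 2δ around x is complete, then there exist ξ ∈ X and a number ε with 0 < ε ≤ δ such that d(x,ξ) < 2δ, sup_{B_ε(ξ)} f ≤ 2 f(ξ), and ε f(ξ) ≥ δ f(x). -/
open Topology Filter Finset

/-- **Hofer's lemma.** Let `(X, d)` be a metric space, `f : X → [0,∞)` a continuous function,
`x ∈ X`, and `δ > 0`. If the closed ball of radius `2δ` around `x` is complete, then there exist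
`ξ ∈ X` and `0 < ε ≤ δ` such that `d(x, ξ) < 2δ`, `sup_{B_ε(ξ)} f ≤ 2 f(ξ)`, and
`ε f(ξ) ≥ δ f(x)`. -/
theorem hofer_lemma {X : Type*} [MetricSpace X] (f : X → ℝ) (hf : Continuous f)
    (hf0 : ∀ y, 0 ≤ f y) (x : X) (δ : ℝ) (hδ : 0 < δ)
    (hcompl : IsComplete (Metric.closedBall x (2 * δ))) :
    ∃ (ξ : X) (ε : ℝ), 0 < ε ∧ ε ≤ δ ∧ dist x ξ < 2 * δ ∧
      (∀ y ∈ Metric.ball ξ ε, f y ≤ 2 * f ξ) ∧ δ * f x ≤ ε * f ξ := by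
  by_contra H
  push_neg at H
  have reformulation : ∀ (x') (k : ℕ), δ * f x ≤ δ / 2 ^ k * f x' ↔ 2 ^ k * f x ≤ f x' := by
    intro x' k
    rw [div_mul_eq_mul_div, le_div_iff₀ (by positivity), mul_assoc, mul_le_mul_iff_right₀ hδ, mul_comm]
  have H' : ∀ k : ℕ, ∀ x', dist x x' < 2 * δ ∧ 2 ^ k * f x ≤ f x' →
      ∃ y, dist x' y < δ / 2 ^ k ∧ 2 * f x' < f y := by
    rintro k x' ⟨h1, h2⟩
    by_contra hy
    push_neg at hy
    have hb : ∀ y ∈ Metric.ball x' (δ / 2 ^ k), f y ≤ 2 * f x' := by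
      intro y hy'
      rw [Metric.mem_ball, dist_comm] at hy'
      exact hy y hy'
    have := H x' (δ / 2 ^ k) (by positivity)
      (div_le_self hδ.le (one_le_pow₀ one_le_two)) h1 hb
    exact absurd ((reformulation x' k).mpr h2) (not_le.mpr this)
  haveI : Nonempty X := ⟨x⟩
  choose! F hF using H'
  let u : ℕ → X := fun n => Nat.recOn n x F
  have hu : ∀ n, dist x (u n) < 2 * δ ∧ 2 ^ n * f x ≤ f (u n) →
      dist (u n) (u (n + 1)) < δ / 2 ^ n ∧ 2 * f (u n) < f (u (n + 1)) :=
    fun n ↦ hF n (u n)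
  have key : ∀ n, dist (u n) (u (n + 1)) < δ / 2 ^ n ∧ 2 * f (u n) < f (u (n + 1)) := by
    intro n
    induction n using Nat.case_strong_induction_on with
    | hz =>
      refine hu 0 ⟨?_, ?_⟩ <;> simp [u]
      positivity
    | hi n IH =>
      have A : dist x (u (n + 1)) < 2 * δ := by
        let r := range (n + 1)
        calc
          dist (u 0) (u (n + 1)) ≤ ∑ i ∈ r, dist (u i) (u <| i + 1) :=
            dist_le_range_sum_dist u (n + 1)
          _ < ∑ i ∈ r, δ / 2 ^ i := by
            apply Finset.sum_lt_sum_of_nonempty ⟨0, Finset.mem_range.mpr (Nat.succ_pos n)⟩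
            intro i hi
            exact (IH i <| Nat.lt_succ_iff.mp <| Finset.mem_range.mp hi).1
          _ = (∑ i ∈ r, (1 / 2 : ℝ) ^ i) * δ := by
            rw [Finset.sum_mul]
            field_simp
            simp [div_eq_mul_inv]
          _ ≤ 2 * δ := by gcongr; apply sum_geometric_two_le
      have B : 2 ^ (n + 1) * f x ≤ f (u (n + 1)) := by
        refine @geom_le (f ∘ u) _ zero_le_two (n + 1) fun m hm => ?_
        exact (IH _ <| Nat.lt_add_one_iff.1 hm).2.le
      exact hu (n + 1) ⟨A, B⟩
  obtain ⟨key₁, key₂⟩ := forall_and.mp key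
  have cauchy_u : CauchySeq u := by
    refine cauchySeq_of_le_geometric _ δ one_half_lt_one fun n => ?_
    simpa only [one_div, inv_pow, div_eq_mul_inv, one_mul] using (key₁ n).le
  have mem : ∀ n, u n ∈ Metric.closedBall x (2 * δ) := by
    intro n
    rw [Metric.mem_closedBall, dist_comm]
    cases n with
    | zero => simp [u]; positivity
    | succ n =>
      have A : dist x (u (n + 1)) ≤ 2 * δ := by
        calc
          dist (u 0) (u (n + 1)) ≤ ∑ i ∈ range (n + 1), dist (u i) (u <| i + 1) :=
            dist_le_range_sum_dist u (n + 1)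
          _ ≤ ∑ i ∈ range (n + 1), δ / 2 ^ i :=
            Finset.sum_le_sum fun i _ => (key₁ i).le
          _ = (∑ i ∈ range (n + 1), (1 / 2 : ℝ) ^ i) * δ := by
            rw [Finset.sum_mul]; field_simp; simp [div_eq_mul_inv]
          _ ≤ 2 * δ := by gcongr; apply sum_geometric_two_le
      exact A
  obtain ⟨y, -, limy⟩ : ∃ y ∈ Metric.closedBall x (2 * δ), Tendsto u atTop (𝓝 y) :=
    cauchySeq_tendsto_of_isComplete hcompl mem cauchy_u
  have lim_top : Tendsto (f ∘ u) atTop atTop := by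
    let v n := (f ∘ u) (n + 1)
    suffices Tendsto v atTop atTop by rwa [tendsto_add_atTop_iff_nat] at this
    have hv₀ : 0 < v 0 := by
      calc
        0 ≤ 2 * f (u 0) := by specialize hf0 x; positivity
        _ < f (u (0 + 1)) := key₂ 0
    apply tendsto_atTop_of_geom_le hv₀ one_lt_two
    exact fun n => (key₂ (n + 1)).le
  have lim : Tendsto (f ∘ u) atTop (𝓝 (f y)) := Tendsto.comp hf.continuousAt limy
  exact not_tendsto_atTop_of_tendsto_nhds lim lim_top
end

section
/- Let k ∈ ℕ₀, let (T,E) be a finite tree, i.e., E is a symmetric, antireflexive relation on the finite set T such that any two vertices of T are connected by a unique simple path of edges, let α₁,…,α_k ∈ T be vertices, f : T → [0,∞) a function, and E₀ > 0 a number. Assume that every vertex α ∈ T satisfies f(α) ≥ E₀ or #{β ∈ T : α E β} + #{i ∈ {1,…,k} : α_i = α} ≥ 3. Then #T ≤ 2(∑_{α∈T} f(α))/E₀ + k. -/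
/-- **Bound for a tree.** Let `k ∈ ℕ₀`, `(T, E)` a finite tree (a symmetric, antireflexive
relation such that any two vertices are connected by a unique simple path of edges, i.e. a
simple graph that is a tree), `α₁, …, α_k ∈ T` vertices, `f : T → [0,∞)` a function, and
`E₀ > 0`. Assume that every vertex `α` satisfies `f(α) ≥ E₀` or
`#{β : α E β} + #{i : α_i = α} ≥ 3`. Then `#T ≤ 2 (∑_{α ∈ T} f(α)) / E₀ + k`. -/
theorem tree_bound {T : Type*} [Fintype T] [DecidableEq T]
    (G : SimpleGraph T) [DecidableRel G.Adj] (hG : G.IsTree)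
    (k : ℕ) (α : Fin k → T) (f : T → ℝ) (hf : ∀ a, 0 ≤ f a)
    (E₀ : ℝ) (hE₀ : 0 < E₀)
    (h : ∀ a : T, E₀ ≤ f a ∨
      3 ≤ G.degree a + (Finset.univ.filter fun i : Fin k => α i = a).card) :
    (Fintype.card T : ℝ) ≤ 2 * (∑ a, f a) / E₀ + k := by
  classical
  have hne : Nonempty T := hG.isConnected.nonempty
  set m : T → ℕ := fun a => (Finset.univ.filter fun i : Fin k => α i = a).card with hmdef
  set S := Finset.univ.filter (fun a => E₀ ≤ f a) with hSdef
  set B := Finset.univ.filter (fun a => ¬ E₀ ≤ f a) with hBdef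
  have hSB : S.card + B.card = Fintype.card T := by
    rw [hSdef, hBdef, Finset.card_filter_add_card_filter_not, Finset.card_univ]
  have hmsum : ∑ a : T, m a = k := by
    have h1 : (Finset.univ : Finset (Fin k)).card
        = ∑ a ∈ Finset.univ, (Finset.univ.filter fun i : Fin k => α i = a).card :=
      Finset.card_eq_sum_card_fiberwise (fun x _ => Finset.mem_univ (α x))
    simpa [hmdef] using h1.symm
  have hdegsum : ∑ a : T, G.degree a = 2 * (Fintype.card T - 1) := by
    rw [G.sum_degrees_eq_twice_card_edges, ← hG.card_edgeFinset]
    omega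
  -- key nat inequality
  have hkey : Fintype.card T ≤ 2 * S.card + k := by
    rcases Nat.lt_or_ge (Fintype.card T) 2 with hn | hn
    · have hn1 : Fintype.card T = 1 := by
        have : 0 < Fintype.card T := Fintype.card_pos
        omega
      obtain ⟨a, ha⟩ := Fintype.card_eq_one_iff.mp hn1
      rcases h a with hfa | hdeg
      · have : a ∈ S := Finset.mem_filter.mpr ⟨Finset.mem_univ a, hfa⟩
        have : 1 ≤ S.card := Finset.card_pos.mpr ⟨a, this⟩
        omega
      · have hd0 : G.degree a = 0 := by
          by_contra hd
          obtain ⟨b, hb⟩ := G.degree_pos_iff_exists_adj a |>.mp (Nat.pos_of_ne_zero hd)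
          exact G.ne_of_adj hb (ha b).symm
        have hmk : (Finset.univ.filter fun i : Fin k => α i = a).card ≤ k := by
          simpa using (Finset.card_filter_le (Finset.univ : Finset (Fin k))
            (fun i => α i = a))
        rw [hd0] at hdeg
        omega
    · -- every vertex has degree ≥ 1
      have hdeg1 : ∀ a : T, 1 ≤ G.degree a := by
        intro a
        obtain ⟨b, hb⟩ := Fintype.exists_ne_of_one_lt_card hn a
        obtain ⟨w⟩ := hG.isConnected.preconnected a b
        cases w with
        | nil => exact absurd rfl hb
        | cons hadj p => exact (G.degree_pos_iff_exists_adj a).mpr ⟨_, hadj⟩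
      have hsum : S.card * 1 + B.card * 3 ≤ ∑ a : T, (G.degree a + m a) := by
        have hsplit : ∑ a : T, (G.degree a + m a)
            = ∑ a ∈ S, (G.degree a + m a) + ∑ a ∈ B, (G.degree a + m a) := by
          rw [hSdef, hBdef, Finset.sum_filter_add_sum_filter_not]
        rw [hsplit]
        gcongr ?_ + ?_
        · calc S.card * 1 = ∑ _a ∈ S, 1 := by rw [Finset.sum_const, smul_eq_mul]
            _ ≤ ∑ a ∈ S, (G.degree a + m a) := by
                apply Finset.sum_le_sum
                intro a _
                have := hdeg1 a
                omega
        · calc B.card * 3 = ∑ _a ∈ B, 3 := by rw [Finset.sum_const, smul_eq_mul]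
            _ ≤ ∑ a ∈ B, (G.degree a + m a) := by
                apply Finset.sum_le_sum
                intro a haB
                rcases h a with hfa | hd
                · exact absurd hfa (Finset.mem_filter.mp haB).2
                · exact hd
      rw [Finset.sum_add_distrib, hdegsum, hmsum] at hsum
      omega
  -- real part
  have hScard : (S.card : ℝ) ≤ (∑ a, f a) / E₀ := by
    rw [le_div_iff₀ hE₀]
    calc (S.card : ℝ) * E₀ = ∑ _a ∈ S, E₀ := by rw [Finset.sum_const, nsmul_eq_mul]
      _ ≤ ∑ a ∈ S, f a := by
          apply Finset.sum_le_sum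
          intro a haS
          exact (Finset.mem_filter.mp haS).2
      _ ≤ ∑ a, f a := Finset.sum_le_sum_of_subset_of_nonneg (Finset.subset_univ S)
          (fun a _ _ => hf a)
  calc (Fintype.card T : ℝ) ≤ 2 * S.card + k := by exact_mod_cast hkey
    _ ≤ 2 * ((∑ a, f a) / E₀) + k := by linarith
    _ = 2 * (∑ a, f a) / E₀ + k := by ring
end

section
/- Let X be a first-countable topological space and G a group acting on X such that for every g ∈ G the map x ↦ g·x is a continuous self-map of X. Equip the orbit space X/G with the quotient topology. If a sequence y_ν ∈ X/G converges to a point y ∈ X/G and x ∈ X is a representative of y, then there exists a representative x_ν ∈ X of y_ν, for each ν, such that x_ν converges to x in X. -/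
/-- **Convergence in the quotient.** Let `X` be a first-countable topological space and `G` a
group acting on `X` such that each `g ∈ G` acts as a continuous self-map of `X`. Equip the orbit
space `X/G` with the quotient topology. If a sequence `y_ν ∈ X/G` converges to a point `y ∈ X/G`
and `x` is a representative of `y`, then there exist representatives `x_ν` of `y_ν` such that
`x_ν` converges to `x` in `X`. -/
theorem convergence_in_quotient {X : Type*} [TopologicalSpace X]
    [FirstCountableTopology X] {G : Type*} [Group G] [MulAction G X]
    (hcont : ∀ g : G, Continuous fun x : X => g • x)
    (y : ℕ → Quotient (MulAction.orbitRel G X)) (x : X)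
    (hconv : Filter.Tendsto y Filter.atTop
      (nhds (Quotient.mk (MulAction.orbitRel G X) x))) :
    ∃ xs : ℕ → X, (∀ ν, Quotient.mk (MulAction.orbitRel G X) (xs ν) = y ν) ∧
      Filter.Tendsto xs Filter.atTop (nhds x) := by
  classical
  letI : ContinuousConstSMul G X := ⟨hcont⟩
  set π := Quotient.mk (MulAction.orbitRel G X) with hπdef
  have hπ : IsOpenQuotientMap π := MulAction.isOpenQuotientMap_quotientMk
  rw [← hπ.map_nhds_eq x] at hconv
  obtain ⟨U, hU⟩ := (nhds x).exists_antitone_basis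
  have h : ∀ n, ∀ᶠ ν in Filter.atTop, y ν ∈ π '' U n := fun n =>
    hconv (Filter.image_mem_map (hU.mem n))
  choose N hN using fun n => Filter.eventually_atTop.1 (h n)
  -- `N' n` dominates both `N n` and `n`.
  set N' : ℕ → ℕ := fun n => N n + n with hN'def
  have hN'N : ∀ n, N n ≤ N' n := fun n => Nat.le_add_right _ _
  have hN'n : ∀ n, n ≤ N' n := fun n => Nat.le_add_left _ _
  set m : ℕ → ℕ := fun ν => Nat.findGreatest (fun n => N' n ≤ ν) ν with hmdef
  have key : ∀ ν, ∃ z : X, π z = y ν ∧ (N' 0 ≤ ν → z ∈ U (m ν)) := by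
    intro ν
    by_cases hν : N' 0 ≤ ν
    · have hspec : N' (m ν) ≤ ν :=
        Nat.findGreatest_spec (P := fun n => N' n ≤ ν) (Nat.zero_le ν) hν
      have : y ν ∈ π '' U (m ν) := hN (m ν) ν (le_trans (hN'N _) hspec)
      obtain ⟨z, hz, hzy⟩ := this
      exact ⟨z, hzy, fun _ => hz⟩
    · exact ⟨(y ν).out, Quotient.out_eq _, fun h => absurd h hν⟩
  choose xs hxy hxs using key
  refine ⟨xs, hxy, ?_⟩
  rw [hU.toHasBasis.tendsto_right_iff]
  intro k _
  filter_upwards [Filter.eventually_ge_atTop (N' k), Filter.eventually_ge_atTop (N' 0)]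
    with ν hν1 hν2
  have hk : k ≤ m ν := Nat.le_findGreatest (le_trans (hN'n k) hν1) hν1
  exact hU.antitone hk (hxs ν hν2)
end

section
/- Let X be a Hausdorff topological space, d ∈ ℕ₀, and 𝒰 a basis for the topology of X. For a subset Y ⊆ X and d₀ ∈ ℕ₀ let V_Y^{d₀} := {m ∈ Sym^d(X) : ∑_{x∈Y} m(x) = d₀ and m(x) = 0 for every x in the topological boundary of Y}. Then the sets V_U^{d₀}, for U ∈ 𝒰 and d₀ ∈ ℕ₀, form a subbasis for the topology of Sym^d(X), i.e., the quotient topology on Sym^d(X) is generated by this family of sets. -/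
open TopologicalSpace Set


/-- The setoid on `Fin d → X` identifying tuples that differ by a permutation; its quotient is
the `d`-fold symmetric product `Sym^d(X)`. -/
def permSetoid (X : Type*) (d : ℕ) : Setoid (Fin d → X) where
  r v w := ∃ σ : Equiv.Perm (Fin d), v ∘ σ = w
  iseqv := by
    constructor
    · exact fun v => ⟨Equiv.refl _, rfl⟩
    · rintro v w ⟨σ, rfl⟩
      exact ⟨σ.symm, by ext i; simp⟩
    · rintro u v w ⟨σ, rfl⟩ ⟨τ, rfl⟩
      exact ⟨τ.trans σ, by ext i; simp⟩

/-- The set `V_Y^{d₀} ⊆ Sym^d(X)` of points `m` of the symmetric product whose total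
multiplicity on `Y` equals `d₀` and whose multiplicity vanishes on the boundary of `Y`.
In terms of a representative tuple `v`, this means `#{i : v i ∈ Y} = d₀` and no `v i` lies on
the boundary of `Y`. -/
def symV {X : Type*} [TopologicalSpace X] (d : ℕ) (Y : Set X) (d₀ : ℕ) :
    Set (Quotient (permSetoid X d)) :=
  {q | ∃ v : Fin d → X, Quotient.mk (permSetoid X d) v = q ∧
    Nat.card {i : Fin d // v i ∈ Y} = d₀ ∧ ∀ i, v i ∉ frontier Y}

lemma mem_symV_iff {X : Type*} [TopologicalSpace X] {d : ℕ} (Y : Set X) (d₀ : ℕ)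
    (w : Fin d → X) :
    Quotient.mk (permSetoid X d) w ∈ symV d Y d₀ ↔
      Nat.card {i : Fin d // w i ∈ Y} = d₀ ∧ ∀ i, w i ∉ frontier Y := by
  constructor
  · rintro ⟨v, hv, hcard, hfr⟩
    obtain ⟨σ, hσ⟩ : ∃ σ : Equiv.Perm (Fin d), v ∘ σ = w := Quotient.exact hv
    subst hσ
    refine ⟨?_, fun i => hfr (σ i)⟩
    rw [← hcard]
    exact Nat.card_congr (σ.subtypeEquiv fun i => Iff.rfl)
  · intro h
    exact ⟨w, rfl, h⟩

lemma isOpen_symV_preimage {X : Type*} [TopologicalSpace X] {d : ℕ} (Y : Set X) (d₀ : ℕ) :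
    IsOpen {v : Fin d → X | Nat.card {i : Fin d // v i ∈ Y} = d₀ ∧ ∀ i, v i ∉ frontier Y} := by
  classical
  rw [isOpen_iff_forall_mem_open]
  rintro v ⟨hcard, hfr⟩
  refine ⟨Set.pi univ (fun i => if v i ∈ Y then interior Y else (closure Y)ᶜ), ?_, ?_, ?_⟩
  · rintro w hw
    have hmem : ∀ i, (w i ∈ Y ↔ v i ∈ Y) ∧ w i ∉ frontier Y := by
      intro i
      have hwi := hw i (mem_univ i)
      dsimp only at hwi
      by_cases h : v i ∈ Y
      · rw [if_pos h] at hwi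
        exact ⟨⟨fun _ => h, fun _ => interior_subset hwi⟩,
          fun hf => hf.2 hwi⟩
      · rw [if_neg h] at hwi
        exact ⟨⟨fun hwY => (hwi (subset_closure hwY)).elim, fun hvY => (h hvY).elim⟩,
          fun hf => hwi hf.1⟩
    refine ⟨?_, fun i => (hmem i).2⟩
    rw [← hcard]
    exact Nat.card_congr (Equiv.subtypeEquivRight fun i => (hmem i).1)
  · exact isOpen_set_pi finite_univ (fun i _ => by
      split
      · exact isOpen_interior
      · exact isClosed_closure.isOpen_compl)
  · intro i _
    dsimp only
    by_cases h : v i ∈ Y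
    · rw [if_pos h]
      by_contra hint
      exact hfr i ⟨subset_closure h, hint⟩
    · rw [if_neg h]
      intro hcl
      exact hfr i ⟨hcl, fun hint => h (interior_subset hint)⟩

/-- Two functions with equal fiber cardinalities differ by a permutation. -/
lemma exists_perm_of_card_fibers_eq {β : Type*} {d : ℕ} (f g : Fin d → β)
    (h : ∀ b, Nat.card {i : Fin d // f i = b} = Nat.card {i : Fin d // g i = b}) :
    ∃ σ : Equiv.Perm (Fin d), ∀ i, g (σ i) = f i := by
  have key : ∀ b, Nonempty ({i : Fin d // f i = b} ≃ {i : Fin d // g i = b}) := fun b =>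
    Finite.card_eq.mp (h b)
  exact ⟨Equiv.ofFiberEquiv (fun b => (key b).some), fun i =>
    Equiv.ofFiberEquiv_map (fun b => (key b).some) i⟩

/-- A set all of whose points have a finite-intersection-of-generators neighborhood inside it
is generated-open. -/
lemma generateOpen_of_pointwise {α : Type*} (g : Set (Set α)) (W : Set α)
    (h : ∀ q ∈ W, ∃ S : Set (Set α), S.Finite ∧ S ⊆ g ∧ q ∈ ⋂₀ S ∧ ⋂₀ S ⊆ W) :
    TopologicalSpace.GenerateOpen g W := by
  have hsInter : ∀ S : Set (Set α), S.Finite → S ⊆ g → TopologicalSpace.GenerateOpen g (⋂₀ S) :=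
    fun S hS => Set.Finite.induction_on (motive := fun s _ => s ⊆ g →
        TopologicalSpace.GenerateOpen g (⋂₀ s)) S hS
      (fun _ => by rw [Set.sInter_empty]; exact .univ)
      (fun {a T} _ _ ih hsub => by
        rw [Set.sInter_insert]
        exact .inter _ _ (.basic _ (hsub (Set.mem_insert _ _)))
          (ih fun t ht => hsub (Set.mem_insert_of_mem _ ht)))
  choose S hfin hsub hmem hsubW using h
  have hW : W = ⋃₀ {t | ∃ q, ∃ hq : q ∈ W, t = ⋂₀ S q hq} := by
    ext x
    constructor
    · intro hx; exact ⟨_, ⟨x, hx, rfl⟩, hmem x hx⟩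
    · rintro ⟨t, ⟨q, hq, rfl⟩, hx⟩; exact hsubW q hq hx
  rw [hW]
  exact .sUnion _ (by rintro t ⟨q, hq, rfl⟩; exact hsInter _ (hfin q hq) (hsub q hq))


/-- Let `X` be a Hausdorff topological space, `d ∈ ℕ₀`, and `𝒰` a basis for the topology of
`X`. Then the sets `V_U^{d₀}`, for `U ∈ 𝒰` and `d₀ ∈ ℕ₀`, form a subbasis for the topology of
the symmetric product `Sym^d(X)`: the quotient topology on `Sym^d(X)` is generated by this
family of sets. -/
theorem symmetric_product_subbasis {X : Type*} [TopologicalSpace X] [T2Space X] (d : ℕ)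
    (𝒰 : Set (Set X)) (h𝒰 : TopologicalSpace.IsTopologicalBasis 𝒰) :
    (instTopologicalSpaceQuotient : TopologicalSpace (Quotient (permSetoid X d))) =
      TopologicalSpace.generateFrom {s | ∃ U ∈ 𝒰, ∃ d₀ : ℕ, s = symV d U d₀} := by
  classical
  refine le_antisymm (le_generateFrom ?_) ?_
  · rintro s ⟨U, hU, d₀, rfl⟩
    rw [← (isQuotientMap_quotient_mk' (s := permSetoid X d)).isOpen_preimage]
    have hpre : @Quotient.mk' _ (permSetoid X d) ⁻¹' symV d U d₀ =
        {v : Fin d → X | Nat.card {i : Fin d // v i ∈ U} = d₀ ∧ ∀ i, v i ∉ frontier U} := by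
      ext w
      exact mem_symV_iff U d₀ w
    rw [hpre]
    exact isOpen_symV_preimage U d₀
  · rw [TopologicalSpace.le_def]
    intro W hW
    show TopologicalSpace.GenerateOpen _ W
    apply generateOpen_of_pointwise
    intro q hq
    obtain ⟨v, hv⟩ := Quotient.exists_rep q
    have hWpre : IsOpen (Quotient.mk (permSetoid X d) ⁻¹' W) :=
      (continuous_quotient_mk').isOpen_preimage W hW
    have hvpre : v ∈ Quotient.mk (permSetoid X d) ⁻¹' W := by
      rw [mem_preimage, hv]; exact hq
    obtain ⟨I, u, huI, hIsub⟩ := isOpen_pi_iff.mp hWpre v hvpre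
    set O : Fin d → Set X := fun i => if i ∈ I then u i else univ with hO
    have hOopen : ∀ i, IsOpen (O i) := fun i => by
      rw [hO]; dsimp only; split
      · exact (huI i ‹_›).1
      · exact isOpen_univ
    have hvO : ∀ i, v i ∈ O i := fun i => by
      rw [hO]; dsimp only; split
      · exact (huI i ‹_›).2
      · trivial
    have hOsub : Set.pi univ O ⊆ Quotient.mk (permSetoid X d) ⁻¹' W := by
      intro w hw
      refine hIsub fun i hi => ?_
      have h := hw i (mem_univ i)
      rw [hO] at h; dsimp only at h; rwa [if_pos (Finset.mem_coe.mp hi)] at h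
    -- Hausdorff separation function
    have hsep : ∀ x y : X, x ≠ y → ∃ p : Set X × Set X,
        IsOpen p.1 ∧ IsOpen p.2 ∧ x ∈ p.1 ∧ y ∈ p.2 ∧ Disjoint p.1 p.2 := by
      intro x y hxy
      obtain ⟨s, t, h1, h2, h3, h4, h5⟩ := t2_separation hxy
      exact ⟨(s, t), h1, h2, h3, h4, h5⟩
    choose! Fp hF1 hF2 hF3 hF4 hF5 using hsep
    -- the pairwise-disjoint open neighbourhoods of the values of v
    set A : X → Set X := fun x =>
      ⋂ j : Fin d, if v j = x then O j else (Fp x (v j)).1 ∩ (Fp (v j) x).2 with hA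
    have hAopen : ∀ x, IsOpen (A x) := fun x => by
      rw [hA]
      refine isOpen_iInter_of_finite fun j => ?_
      split
      · exact hOopen j
      · rename_i h
        exact (hF1 x (v j) fun h' => h h'.symm).inter (hF2 (v j) x h)
    have hmemA : ∀ i : Fin d, v i ∈ A (v i) := fun i => by
      rw [hA]
      refine mem_iInter.mpr fun j => ?_
      split
      · rename_i h
        exact h ▸ hvO j
      · rename_i h
        exact ⟨hF3 (v i) (v j) fun h' => h h'.symm, hF4 (v j) (v i) h⟩
    have hAO : ∀ i : Fin d, A (v i) ⊆ O i := fun i => by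
      rw [hA]
      intro y hy
      have h := mem_iInter.mp hy i
      rwa [if_pos rfl] at h
    have hsubF1 : ∀ i j : Fin d, v i ≠ v j → A (v i) ⊆ (Fp (v i) (v j)).1 := fun i j hij => by
      rw [hA]
      intro y hy
      have h := mem_iInter.mp hy j
      rw [if_neg fun h' => hij h'.symm] at h
      exact h.1
    have hsubF2 : ∀ i j : Fin d, v i ≠ v j → A (v j) ⊆ (Fp (v i) (v j)).2 := fun i j hij => by
      rw [hA]
      intro y hy
      have h := mem_iInter.mp hy i
      rw [if_neg hij] at h
      exact h.2
    have hdisjA : ∀ i j : Fin d, v i ≠ v j → Disjoint (A (v i)) (A (v j)) := fun i j h =>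
      (hF5 (v i) (v j) h).mono (hsubF1 i j h) (hsubF2 i j h)
    -- basis elements inside the A's
    have hUex : ∀ x : X, x ∈ Set.range v → ∃ U ∈ 𝒰, x ∈ U ∧ U ⊆ A x := by
      rintro x ⟨i, rfl⟩
      exact h𝒰.exists_subset_of_mem_open (hmemA i) (hAopen (v i))
    choose! U hU𝒰 hUmem hUsub using hUex
    have hUfib : ∀ i j : Fin d, v j ∈ U (v i) ↔ v j = v i := by
      intro i j
      constructor
      · intro h
        by_contra hne
        exact Set.disjoint_left.mp (hdisjA j i hne) (hmemA j) (hUsub (v i) ⟨i, rfl⟩ h)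
      · intro h
        exact h ▸ hUmem (v i) ⟨i, rfl⟩
    refine ⟨(fun x => symV d (U x) (Nat.card {j : Fin d // v j = x})) '' (Set.range v),
      ((Set.finite_range v).image _), ?_, ?_, ?_⟩
    · rintro s ⟨x, ⟨i, rfl⟩, rfl⟩
      exact ⟨U (v i), hU𝒰 (v i) ⟨i, rfl⟩, _, rfl⟩
    · rw [Set.mem_sInter]
      rintro t ⟨x, ⟨i, rfl⟩, rfl⟩
      rw [← hv, mem_symV_iff]
      constructor
      · exact Nat.card_congr (Equiv.subtypeEquivRight fun j => hUfib i j)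
      · intro j
        by_cases h : v j = v i
        · have hUopen : IsOpen (U (v i)) := h𝒰.isOpen (hU𝒰 (v i) ⟨i, rfl⟩)
          intro hf
          rw [hUopen.frontier_eq] at hf
          exact hf.2 ((hUfib i j).mpr h)
        · have hdis : Disjoint (A (v j)) (closure (U (v i))) :=
            Disjoint.closure_right ((hdisjA j i h).mono_right (hUsub (v i) ⟨i, rfl⟩))
              (hAopen (v j))
          exact fun hf => Set.disjoint_left.mp hdis (hmemA j) (frontier_subset_closure hf)
    · intro m hm
      obtain ⟨w, hw⟩ := Quotient.exists_rep m
      have hmx : ∀ i : Fin d,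
          Nat.card {j : Fin d // w j ∈ U (v i)} = Nat.card {j : Fin d // v j = v i} := by
        intro i
        have hmem := Set.mem_sInter.mp hm _ ⟨v i, ⟨i, rfl⟩, rfl⟩
        rw [← hw, mem_symV_iff] at hmem
        exact hmem.1
      have hfilter : ∀ i : Fin d, (Finset.univ.filter fun j => w j ∈ U (v i)).card
          = (Finset.univ.filter fun j => v j = v i).card := by
        intro i
        have h := hmx i
        rwa [Nat.card_eq_fintype_card, Nat.card_eq_fintype_card, Fintype.card_subtype,
          Fintype.card_subtype] at h
      have hsum : ∑ x ∈ Finset.univ.image v, (Finset.univ.filter fun j => v j = x).card = d := by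
        rw [← Finset.card_eq_sum_card_fiberwise
          (fun i _ => Finset.mem_image_of_mem v (Finset.mem_univ i))]
        simp
      have hdisjU : ∀ i j : Fin d, v i ≠ v j → Disjoint (U (v i)) (U (v j)) := fun i j h =>
        (hdisjA i j h).mono (hUsub (v i) ⟨i, rfl⟩) (hUsub (v j) ⟨j, rfl⟩)
      have hbi : (Finset.univ.image v).biUnion
          (fun x => Finset.univ.filter fun j => w j ∈ U x) = Finset.univ := by
        apply Finset.eq_univ_of_card
        rw [Finset.card_biUnion]
        · rw [Finset.sum_congr rfl (fun x hx => ?_), hsum]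
          · simp
          · obtain ⟨i, _, rfl⟩ := Finset.mem_image.mp hx
            exact hfilter i
        · intro x hx y hy hxy
          obtain ⟨i, _, rfl⟩ := Finset.mem_image.mp hx
          obtain ⟨j, _, rfl⟩ := Finset.mem_image.mp hy
          rw [Function.onFun, Finset.disjoint_left]
          intro a ha1 ha2
          exact Set.disjoint_left.mp (hdisjU i j hxy) (Finset.mem_filter.mp ha1).2
            (Finset.mem_filter.mp ha2).2
      have hgex : ∀ j : Fin d, ∃ i : Fin d, w j ∈ U (v i) := by
        intro j
        have hj := Finset.mem_univ j
        rw [← hbi] at hj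
        obtain ⟨x, hx, hjx⟩ := Finset.mem_biUnion.mp hj
        obtain ⟨i, _, rfl⟩ := Finset.mem_image.mp hx
        exact ⟨i, (Finset.mem_filter.mp hjx).2⟩
      choose r hr using hgex
      have hfibeq : ∀ i : Fin d, ∀ j : Fin d, v (r j) = v i ↔ w j ∈ U (v i) := by
        intro i j
        constructor
        · intro h
          exact h ▸ hr j
        · intro h
          by_contra hne
          exact Set.disjoint_left.mp (hdisjU (r j) i hne) (hr j) h
      have hfib : ∀ b : X, Nat.card {i : Fin d // v i = b}
          = Nat.card {j : Fin d // v (r j) = b} := by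
        intro b
        by_cases hb : b ∈ Set.range v
        · obtain ⟨i, rfl⟩ := hb
          rw [← hmx i]
          exact (Nat.card_congr (Equiv.subtypeEquivRight fun j => hfibeq i j)).symm
        · haveI h1 : IsEmpty {i : Fin d // v i = b} := ⟨fun ⟨i, hi⟩ => hb ⟨i, hi⟩⟩
          haveI h2 : IsEmpty {j : Fin d // v (r j) = b} := ⟨fun ⟨j, hj⟩ => hb ⟨r j, hj⟩⟩
          rw [Nat.card_of_isEmpty, Nat.card_of_isEmpty]
      obtain ⟨σ, hσ⟩ := exists_perm_of_card_fibers_eq v (fun j => v (r j)) hfib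
      have hwσ : ∀ i, w (σ i) ∈ O i := by
        intro i
        have h := hr (σ i)
        rw [hσ i] at h
        exact hAO i (hUsub (v i) ⟨i, rfl⟩ h)
      have hpi : (w ∘ σ) ∈ Set.pi univ O := fun i _ => hwσ i
      have hmem := hOsub hpi
      have heq : Quotient.mk (permSetoid X d) w = Quotient.mk (permSetoid X d) (w ∘ σ) :=
        Quotient.sound ⟨σ, rfl⟩
      rw [← hw, heq]
      exact hmem
end

section
/- Let n ∈ ℕ, n < p < ∞, and λ > -n/p. Then every sequence of continuously differentiable functions u_ν : ℝⁿ → ℝ with sup_ν (‖⟨·⟩^λ u_ν‖_{L^p(ℝⁿ)} + ‖⟨·⟩^{λ+1} ‖Du_ν‖‖_{L^p(ℝⁿ)}) < ∞ has a subsequence that converges uniformly on all of ℝⁿ to a bounded continuous function u : ℝⁿ → ℝ. -/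
open MeasureTheory
open scoped ENNReal

/-- The Japanese bracket `⟨x⟩ = √(1 + |x|²)`. -/
noncomputable def jbracket {n : ℕ} (x : EuclideanSpace ℝ (Fin n)) : ℝ :=
  Real.sqrt (1 + ‖x‖ ^ 2)

open Metric Set Filter
open scoped ENNReal Topology Pointwise

set_option maxHeartbeats 1000000

namespace WSCE
abbrev Euc (n : ℕ) := EuclideanSpace ℝ (Fin n)
noncomputable def kap (n : ℕ) : ℝ := (volume (ball (0 : Euc n) 1)).toReal
lemma kap_pos (n : ℕ) : 0 < kap n :=
  ENNReal.toReal_pos (measure_ball_pos volume _ one_pos).ne' measure_ball_lt_top.ne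

lemma vol_cb (n : ℕ) (c : Euc n) {r : ℝ} (hr : 0 ≤ r) :
    (volume (closedBall c r)).toReal = kap n * r ^ (n : ℕ) := by
  rw [Measure.addHaar_closedBall volume c hr, finrank_euclideanSpace_fin]
  rw [ENNReal.toReal_mul, ENNReal.toReal_ofReal (by positivity), kap, mul_comm]

lemma ftc {n : ℕ} {u : Euc n → ℝ} (hu : ContDiff ℝ 1 u) (x z : Euc n) :
    |u z - u x| ≤ (∫ t in (0:ℝ)..1, ‖fderiv ℝ u ((1 - t) • x + t • z)‖) * ‖z - x‖ := by
  set γ : ℝ → Euc n := fun t => (1 - t) • x + t • z with hγ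
  have hγc : Continuous γ := by fun_prop
  have hDc : Continuous fun w => fderiv ℝ u w := hu.continuous_fderiv one_ne_zero
  have hcont : Continuous fun t => (fderiv ℝ u (γ t)) (z - x) :=
    (hDc.comp hγc).clm_apply continuous_const
  have hderiv : ∀ t ∈ Set.uIcc (0:ℝ) 1,
      HasDerivAt (fun s => u (γ s)) ((fderiv ℝ u (γ t)) (z - x)) t := by
    intro t _
    have h1 : HasDerivAt γ (z - x) t := by
      have : HasDerivAt (fun s : ℝ => x + s • (z - x)) ((1:ℝ) • (z - x)) t :=
        ((hasDerivAt_id t).smul_const (z - x)).const_add x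
      simp only [one_smul] at this
      convert this using 1
      funext s
      simp only [hγ, sub_smul, one_smul, smul_sub]
      abel
    exact ((hu.differentiable one_ne_zero (γ t)).hasFDerivAt).comp_hasDerivAt t h1
  have heq : ∫ t in (0:ℝ)..1, (fderiv ℝ u (γ t)) (z - x) = u (γ 1) - u (γ 0) :=
    intervalIntegral.integral_eq_sub_of_hasDerivAt hderiv (hcont.intervalIntegrable 0 1)
  have hγ0 : γ 0 = x := by simp [hγ]
  have hγ1 : γ 1 = z := by simp [hγ]
  rw [hγ0, hγ1] at heq
  calc |u z - u x| = ‖∫ t in (0:ℝ)..1, (fderiv ℝ u (γ t)) (z - x)‖ := by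
        rw [heq]; exact (Real.norm_eq_abs _).symm
    _ ≤ ∫ t in (0:ℝ)..1, ‖(fderiv ℝ u (γ t)) (z - x)‖ :=
        intervalIntegral.norm_integral_le_integral_norm zero_le_one
    _ ≤ ∫ t in (0:ℝ)..1, ‖fderiv ℝ u (γ t)‖ * ‖z - x‖ := by
        apply intervalIntegral.integral_mono_on zero_le_one
          (hcont.norm.intervalIntegrable 0 1)
          (((hDc.comp hγc).norm.mul continuous_const).intervalIntegrable 0 1)
        intro t _
        exact ContinuousLinearMap.le_opNorm _ _
    _ = (∫ t in (0:ℝ)..1, ‖fderiv ℝ u (γ t)‖) * ‖z - x‖ := by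
        rw [intervalIntegral.integral_mul_const]

lemma holder_set {n : ℕ} {p q : ℝ} (hpq : p.HolderConjugate q) {g : Euc n → ℝ}
    (hgc : Continuous g) (hg0 : ∀ x, 0 ≤ g x) {s : Set (Euc n)} (hs : IsCompact s)
    {P : ℝ} (hP0 : 0 ≤ P) (hP : ∫ z in s, g z ^ p ≤ P ^ p) :
    ∫ z in s, g z ≤ P * (volume s).toReal ^ (1 / q) := by
  haveI : IsFiniteMeasure (volume.restrict s) :=
    ⟨by rw [Measure.restrict_apply_univ]; exact hs.measure_lt_top⟩
  obtain ⟨C, hC⟩ := hs.exists_bound_of_continuousOn hgc.continuousOn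
  have hgm : MemLp g (ENNReal.ofReal p) (volume.restrict s) :=
    MemLp.of_bound ((hgc.aestronglyMeasurable).restrict) C
      (ae_restrict_of_forall_mem hs.measurableSet hC)
  have h1m : MemLp (fun _ : Euc n => (1:ℝ)) (ENNReal.ofReal q) (volume.restrict s) :=
    memLp_const 1
  have hmain := integral_mul_le_Lp_mul_Lq_of_nonneg (μ := volume.restrict s) hpq
    (Filter.Eventually.of_forall hg0) (Filter.Eventually.of_forall fun _ => zero_le_one) hgm h1m
  simp only [mul_one, Real.one_rpow] at hmain
  have hint1 : ∫ (_ : Euc n) in s, (1:ℝ) = (volume s).toReal := by simp [measureReal_def]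
  rw [hint1] at hmain
  refine hmain.trans (mul_le_mul_of_nonneg_right ?_ (Real.rpow_nonneg ENNReal.toReal_nonneg _))
  have h2 : (∫ z in s, g z ^ p) ^ (1/p) ≤ (P ^ p) ^ (1/p) :=
    Real.rpow_le_rpow (integral_nonneg fun z => Real.rpow_nonneg (hg0 z) p) hP
      (by have := hpq.pos; positivity)
  rwa [← Real.rpow_mul hP0, mul_one_div, div_self hpq.pos.ne', Real.rpow_one] at h2

lemma setint_le_of_elp {n : ℕ} {f g : Euc n → ℝ} (hfm : AEStronglyMeasurable f volume)
    (hg : Continuous g) {p C m : ℝ} (hp : 0 < p) (hC : 0 ≤ C) (hm : 0 < m)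
    {s K : Set (Euc n)} (hsm : MeasurableSet s) (hK : IsCompact K) (hsK : s ⊆ K)
    (hdom : ∀ x ∈ s, m * |g x| ≤ |f x|)
    (help : eLpNorm f (ENNReal.ofReal p) volume ≤ ENNReal.ofReal C) :
    ∫ x in s, |g x| ^ p ≤ (C / m) ^ p := by
  have hpne : (ENNReal.ofReal p) ≠ 0 := by
    simp [ENNReal.ofReal_eq_zero, not_le, hp]
  have hMem : MemLp f (ENNReal.ofReal p) volume :=
    ⟨hfm, lt_of_le_of_lt help ENNReal.ofReal_lt_top⟩
  have htR : (ENNReal.ofReal p).toReal = p := ENNReal.toReal_ofReal hp.le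
  have hfint : Integrable (fun x => |f x| ^ p) volume := by
    have := hMem.integrable_norm_rpow hpne ENNReal.ofReal_ne_top
    simpa [htR, Real.norm_eq_abs] using this
  have hgc : Continuous (fun x => |g x| ^ p) :=
    (hg.abs).rpow_const (fun x => Or.inr hp.le)
  have hglp : IntegrableOn (fun x => |g x| ^ p) s volume :=
    (hgc.continuousOn.integrableOn_compact hK).mono_set hsK
  have step1 : m ^ p * ∫ x in s, |g x| ^ p ≤ ∫ x in s, |f x| ^ p := by
    rw [← integral_const_mul]
    apply setIntegral_mono_on (hglp.const_mul _) (hfint.integrableOn) hsm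
    intro x hx
    rw [← Real.mul_rpow hm.le (abs_nonneg _)]
    exact Real.rpow_le_rpow (by positivity) (hdom x hx) hp.le
  have step2 : ∫ x in s, |f x| ^ p ≤ ∫ x, |f x| ^ p :=
    setIntegral_le_integral hfint
      (Filter.Eventually.of_forall fun x => Real.rpow_nonneg (abs_nonneg _) _)
  have step3 : ∫ x, |f x| ^ p ≤ C ^ p := by
    have heq := hMem.eLpNorm_eq_integral_rpow_norm hpne ENNReal.ofReal_ne_top
    rw [heq] at help
    have h4 : (∫ x, ‖f x‖ ^ p) ^ p⁻¹ ≤ C := by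
      rw [htR] at help
      exact (ENNReal.ofReal_le_ofReal_iff hC).1 help
    have h5 : ((∫ x, ‖f x‖ ^ p) ^ p⁻¹) ^ p ≤ C ^ p :=
      Real.rpow_le_rpow (Real.rpow_nonneg (integral_nonneg fun x =>
        Real.rpow_nonneg (norm_nonneg _) _) _) h4 hp.le
    rw [← Real.rpow_mul (integral_nonneg fun x =>
      Real.rpow_nonneg (norm_nonneg _) _), inv_mul_cancel₀ hp.ne', Real.rpow_one] at h5
    simpa [Real.norm_eq_abs] using h5
  calc ∫ x in s, |g x| ^ p ≤ (m ^ p)⁻¹ * ∫ x in s, |f x| ^ p := by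
        rw [le_inv_mul_iff₀ (by positivity)]
        exact step1
    _ ≤ (m ^ p)⁻¹ * C ^ p := by
        apply mul_le_mul_of_nonneg_left (step2.trans step3) (by positivity)
    _ = (C / m) ^ p := by
        rw [Real.div_rpow hC hm.le, div_eq_inv_mul]


lemma core {n : ℕ} (hn : 0 < n) {p q : ℝ} (hpn : (n : ℝ) < p) (hpq : p.HolderConjugate q)
    {u : Euc n → ℝ} (hu : ContDiff ℝ 1 u) {a x c : Euc n} {r R L Q : ℝ} (hr : 0 < r)
    (hsub : closedBall a r ⊆ closedBall c R) (hx : x ∈ closedBall c R)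
    (hQ0 : 0 ≤ Q) (hL0 : 0 ≤ L) (hL : ∀ z ∈ closedBall a r, ‖z - x‖ ≤ L)
    (hQ : ∀ s : Set (Euc n), MeasurableSet s → s ⊆ closedBall c R →
      ∫ z in s, ‖fderiv ℝ u z‖ ^ p ≤ Q ^ p) :
    |(⨍ z in closedBall a r, u z) - u x| ≤
      L * (p / (p - n)) * kap n ^ (-(1/p)) * r ^ (-((n:ℝ)/p)) * Q := by
  have hp0 : 0 < p := hpq.pos
  have hq0 : 0 < q := hpq.symm.pos
  have hn0 : (0:ℝ) < n := by exact_mod_cast hn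
  have hq1 : 1/q = 1 - 1/p := by
    have := hpq.inv_add_inv_eq_one
    rw [one_div, one_div]; linarith
  set g : Euc n → ℝ := fun w => ‖fderiv ℝ u w‖ with hg
  have hgc : Continuous g := (hu.continuous_fderiv one_ne_zero).norm
  have hg0 : ∀ w, 0 ≤ g w := fun w => norm_nonneg _
  set B := closedBall a r with hB
  have hBm : MeasurableSet B := measurableSet_closedBall
  have hVlt : volume B < ⊤ := (isCompact_closedBall a r).measure_lt_top
  set V : ℝ := (volume B).toReal with hV
  have hV0 : 0 < V := ENNReal.toReal_pos (measure_closedBall_pos volume a hr).ne' hVlt.ne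
  have hVeq : V = kap n * r ^ (n:ℕ) := vol_cb n a hr.le
  have huint : IntegrableOn u B volume :=
    (hu.continuous.continuousOn).integrableOn_compact (isCompact_closedBall a r)
  -- the function F
  set F : Euc n → ℝ → ℝ := fun z t => g ((1 - t) • x + t • z) with hF
  have hFc : Continuous (Function.uncurry F) := by
    apply hgc.comp
    exact ((continuous_const.sub continuous_snd).smul continuous_const).add
      (continuous_snd.smul continuous_fst)
  have hFint : Integrable (Function.uncurry F)
      ((volume.restrict B).prod (volume.restrict (Ioc (0:ℝ) 1))) := by
    rw [Measure.prod_restrict]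
    have hK : IsCompact (B ×ˢ Icc (0:ℝ) 1) := (isCompact_closedBall a r).prod isCompact_Icc
    exact (hFc.continuousOn.integrableOn_compact hK).mono_set
      (Set.prod_mono subset_rfl Ioc_subset_Icc_self)
  -- Step I : reduce to integral bound
  have hstepI : |(⨍ z in B, u z) - u x| ≤ V⁻¹ * ∫ z in B, |u z - u x| := by
    have h1 : (⨍ z in B, u z) - u x = V⁻¹ * ∫ z in B, (u z - u x) := by
      rw [integral_sub huint (integrableOn_const hVlt.ne),
        setAverage_eq, smul_eq_mul, integral_const, measureReal_def, measureReal_def, Measure.restrict_apply_univ,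
        smul_eq_mul, ← hV, mul_sub, ← mul_assoc, inv_mul_cancel₀ hV0.ne', one_mul]
    rw [h1, abs_mul, abs_of_nonneg (inv_nonneg.2 hV0.le)]
    apply mul_le_mul_of_nonneg_left _ (inv_nonneg.2 hV0.le)
    rw [← Real.norm_eq_abs]
    exact (norm_integral_le_integral_norm _).trans (le_of_eq (by simp [Real.norm_eq_abs]))
  -- Step II : pointwise FTC bound
  have hstepII : ∀ z ∈ B, |u z - u x| ≤ L * ∫ t in Ioc (0:ℝ) 1, F z t := by
    intro z hz
    calc |u z - u x| ≤ (∫ t in (0:ℝ)..1, ‖fderiv ℝ u ((1 - t) • x + t • z)‖) * ‖z - x‖ :=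
          ftc hu x z
      _ ≤ (∫ t in (0:ℝ)..1, ‖fderiv ℝ u ((1 - t) • x + t • z)‖) * L :=
          mul_le_mul_of_nonneg_left (hL z hz)
            (intervalIntegral.integral_nonneg zero_le_one (fun t _ => norm_nonneg _))
      _ = L * ∫ t in Ioc (0:ℝ) 1, F z t := by
          rw [intervalIntegral.integral_of_le zero_le_one]; exact mul_comm _ _
  -- Step III+IV : inner bound after swapping
  have hinner : ∀ t ∈ Ioc (0:ℝ) 1,
      ∫ z in B, F z t ≤ Q * kap n ^ (1/q) * r ^ ((n:ℝ)/q) * t ^ (-((n:ℝ)/p)) := by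
    intro t ht
    obtain ⟨ht0, ht1⟩ := ht
    have hcov : ∫ z in B, F z t
        = ((t:ℝ) ^ (n:ℕ))⁻¹ * ∫ w in t • B, g ((1 - t) • x + w) := by
      have h := Measure.setIntegral_comp_smul_of_pos volume
        (fun w => g ((1 - t) • x + w)) B ht0
      rw [finrank_euclideanSpace_fin, smul_eq_mul] at h
      exact h
    have hsmul : t • B = closedBall (t • a) (t * r) := by
      rw [hB, smul_closedBall t a hr.le, Real.norm_eq_abs, abs_of_pos ht0]
    have htrans : ∫ w in closedBall (t • a) (t * r), g ((1 - t) • x + w)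
        = ∫ y in closedBall ((1 - t) • x + t • a) (t * r), g y := by
      have hpre : (fun w => (1 - t) • x + w) ⁻¹' closedBall ((1 - t) • x + t • a) (t * r)
          = closedBall (t • a) (t * r) := by
        ext w
        simp only [mem_preimage, mem_closedBall, dist_eq_norm]
        rw [show (1 - t) • x + w - ((1 - t) • x + t • a) = w - t • a by abel]
      rw [← hpre]
      exact MeasurePreserving.setIntegral_preimage_emb
        (measurePreserving_add_left volume ((1 - t) • x))
        (MeasurableEquiv.addLeft ((1 - t) • x)).measurableEmbedding g _
    have hsubset : closedBall ((1 - t) • x + t • a) (t * r) ⊆ closedBall c R := by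
      intro w hw
      have hz : a + t⁻¹ • (w - ((1 - t) • x + t • a)) ∈ closedBall a r := by
        rw [mem_closedBall, dist_eq_norm]
        have : ‖a + t⁻¹ • (w - ((1 - t) • x + t • a)) - a‖ = t⁻¹ * ‖w - ((1 - t) • x + t • a)‖ := by
          rw [add_sub_cancel_left, norm_smul, Real.norm_eq_abs,
            abs_of_pos (inv_pos.2 ht0)]
        rw [this]
        rw [mem_closedBall, dist_eq_norm] at hw
        calc t⁻¹ * ‖w - ((1 - t) • x + t • a)‖ ≤ t⁻¹ * (t * r) :=
              mul_le_mul_of_nonneg_left hw (inv_pos.2 ht0).le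
          _ = r := by field_simp
      have hw' : w = (1 - t) • x + t • (a + t⁻¹ • (w - ((1 - t) • x + t • a))) := by
        rw [smul_add, smul_smul, mul_inv_cancel₀ ht0.ne', one_smul]
        abel
      rw [hw']
      exact convex_closedBall c R hx (hsub hz) (by linarith) ht0.le (by ring)
    have hhold : ∫ y in closedBall ((1 - t) • x + t • a) (t * r), g y
        ≤ Q * (volume (closedBall ((1 - t) • x + t • a) (t * r))).toReal ^ (1/q) :=
      holder_set hpq hgc hg0 (isCompact_closedBall _ _) hQ0
        (hQ _ measurableSet_closedBall hsubset)
    have hvol : (volume (closedBall ((1 - t) • x + t • a) (t * r))).toReal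
        = kap n * (t * r) ^ (n:ℕ) := vol_cb n _ (by positivity)
    rw [hcov, hsmul, htrans]
    have hbound : ((t:ℝ) ^ (n:ℕ))⁻¹ * ∫ y in closedBall ((1 - t) • x + t • a) (t * r), g y
        ≤ ((t:ℝ) ^ (n:ℕ))⁻¹ * (Q * (kap n * (t * r) ^ (n:ℕ)) ^ (1/q)) := by
      apply mul_le_mul_of_nonneg_left _ (by positivity)
      rw [← hvol]; exact hhold
    refine hbound.trans (le_of_eq ?_)
    -- rpow algebra
    have e0 : ((t * r) ^ (n:ℕ) : ℝ) = t ^ ((n:ℝ)) * r ^ ((n:ℝ)) := by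
      rw [mul_pow, Real.rpow_natCast, Real.rpow_natCast]
    have e1 : (kap n * (t * r) ^ (n:ℕ)) ^ (1/q)
        = kap n ^ (1/q) * t ^ ((n:ℝ)/q) * r ^ ((n:ℝ)/q) := by
      rw [e0, Real.mul_rpow (kap_pos n).le (by positivity),
        Real.mul_rpow (by positivity) (by positivity),
        ← Real.rpow_mul ht0.le, ← Real.rpow_mul hr.le, mul_one_div]
      ring
    have e2 : ((t:ℝ) ^ (n:ℕ))⁻¹ = t ^ (-(n:ℝ)) := by
      rw [← Real.rpow_natCast t n, ← Real.rpow_neg ht0.le]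
    rw [e1, e2]
    have e3 : t ^ (-(n:ℝ)) * t ^ ((n:ℝ)/q) = t ^ (-((n:ℝ)/p)) := by
      rw [← Real.rpow_add ht0]
      congr 1
      rw [div_eq_mul_one_div (n:ℝ) q, hq1]
      ring
    calc t ^ (-(n:ℝ)) * (Q * (kap n ^ (1/q) * t ^ ((n:ℝ)/q) * r ^ ((n:ℝ)/q)))
        = Q * kap n ^ (1/q) * r ^ ((n:ℝ)/q) * (t ^ (-(n:ℝ)) * t ^ ((n:ℝ)/q)) := by ring
      _ = Q * kap n ^ (1/q) * r ^ ((n:ℝ)/q) * t ^ (-((n:ℝ)/p)) := by rw [e3]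
  -- Step V : swap and outer integral
  have hswap : ∫ z in B, (∫ t in Ioc (0:ℝ) 1, F z t) = ∫ t in Ioc (0:ℝ) 1, ∫ z in B, F z t :=
    integral_integral_swap hFint
  have hnp1 : -((n:ℝ)/p) > -1 := by
    rw [gt_iff_lt, neg_lt_neg_iff, div_lt_one hp0]; exact hpn
  have hval : ∫ t in Ioc (0:ℝ) 1, t ^ (-((n:ℝ)/p)) = p / (p - n) := by
    rw [← intervalIntegral.integral_of_le zero_le_one, integral_rpow (Or.inl hnp1)]
    rw [Real.one_rpow, Real.zero_rpow (ne_of_gt (by linarith) : -((n:ℝ)/p) + 1 ≠ 0)]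
    rw [show -((n:ℝ)/p) + 1 = (p - n)/p by field_simp; ring]
    rw [sub_zero, one_div_div]
  have hrint : IntegrableOn
      (fun t : ℝ => Q * kap n ^ (1/q) * r ^ ((n:ℝ)/q) * t ^ (-((n:ℝ)/p))) (Ioc 0 1) volume := by
    have h := intervalIntegral.intervalIntegrable_rpow' (a := 0) (b := 1) hnp1
    exact (((intervalIntegrable_iff_integrableOn_Ioc_of_le zero_le_one).1 h).const_mul _)
  have hlint : IntegrableOn (fun t => ∫ z in B, F z t) (Ioc (0:ℝ) 1) volume :=
    hFint.integral_prod_right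
  have houter : ∫ t in Ioc (0:ℝ) 1, ∫ z in B, F z t
      ≤ Q * kap n ^ (1/q) * r ^ ((n:ℝ)/q) * (p / (p - n)) := by
    calc ∫ t in Ioc (0:ℝ) 1, ∫ z in B, F z t
        ≤ ∫ t in Ioc (0:ℝ) 1, Q * kap n ^ (1/q) * r ^ ((n:ℝ)/q) * t ^ (-((n:ℝ)/p)) :=
          setIntegral_mono_on hlint hrint measurableSet_Ioc (fun t ht => hinner t ht)
      _ = Q * kap n ^ (1/q) * r ^ ((n:ℝ)/q) * ∫ t in Ioc (0:ℝ) 1, t ^ (-((n:ℝ)/p)) :=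
          integral_const_mul _ _
      _ = Q * kap n ^ (1/q) * r ^ ((n:ℝ)/q) * (p / (p - n)) := by rw [hval]
  -- Step VI : assembly
  have habs : IntegrableOn (fun z => |u z - u x|) B volume :=
    ((hu.continuous.sub continuous_const).abs).continuousOn.integrableOn_compact
      (isCompact_closedBall a r)
  have hmargin : IntegrableOn (fun z => L * ∫ t in Ioc (0:ℝ) 1, F z t) B volume :=
    (hFint.integral_prod_left).const_mul L
  have hmain : ∫ z in B, |u z - u x|
      ≤ L * (Q * kap n ^ (1/q) * r ^ ((n:ℝ)/q) * (p / (p - n))) := by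
    calc ∫ z in B, |u z - u x| ≤ ∫ z in B, L * ∫ t in Ioc (0:ℝ) 1, F z t :=
          setIntegral_mono_on habs hmargin hBm hstepII
      _ = L * ∫ z in B, ∫ t in Ioc (0:ℝ) 1, F z t := integral_const_mul _ _
      _ = L * ∫ t in Ioc (0:ℝ) 1, ∫ z in B, F z t := by rw [hswap]
      _ ≤ L * (Q * kap n ^ (1/q) * r ^ ((n:ℝ)/q) * (p / (p - n))) :=
          mul_le_mul_of_nonneg_left houter hL0
  refine hstepI.trans ?_
  refine (mul_le_mul_of_nonneg_left hmain (inv_nonneg.2 hV0.le)).trans (le_of_eq ?_)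
  have ek : (kap n)⁻¹ * kap n ^ (1/q) = kap n ^ (-(1/p)) := by
    rw [← Real.rpow_neg_one (kap n), ← Real.rpow_add (kap_pos n)]
    congr 1; linarith [hq1]
  have er : ((r : ℝ) ^ (n:ℕ))⁻¹ * r ^ ((n:ℝ)/q) = r ^ (-((n:ℝ)/p)) := by
    rw [← Real.rpow_natCast r n, ← Real.rpow_neg hr.le, ← Real.rpow_add hr]
    congr 1
    rw [div_eq_mul_one_div (n:ℝ) q, div_eq_mul_one_div (n:ℝ) p, hq1]
    ring
  have hfin : V⁻¹ * (L * (Q * kap n ^ (1/q) * r ^ ((n:ℝ)/q) * (p / (p - n))))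
      = L * (p / (p - n)) * ((kap n)⁻¹ * kap n ^ (1/q)) * (((r:ℝ) ^ (n:ℕ))⁻¹ * r ^ ((n:ℝ)/q)) * Q := by
    rw [hVeq, mul_inv]
    ring
  rw [hfin, ek, er]


lemma avg_bound {n : ℕ} {p q : ℝ} (hpq : p.HolderConjugate q) (hq1 : 1/q = 1 - 1/p)
    {u : Euc n → ℝ} (hu : Continuous u) {a : Euc n} {r P : ℝ} (hr : 0 < r) (hP0 : 0 ≤ P)
    (hP : ∫ z in closedBall a r, |u z| ^ p ≤ P ^ p) :
    |⨍ z in closedBall a r, u z| ≤ kap n ^ (-(1/p)) * r ^ (-((n:ℝ)/p)) * P := by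
  set B := closedBall a r with hB
  have hVlt : volume B < ⊤ := (isCompact_closedBall a r).measure_lt_top
  set V : ℝ := (volume B).toReal with hV
  have hV0 : 0 < V := ENNReal.toReal_pos (measure_closedBall_pos volume a hr).ne' hVlt.ne
  have hVeq : V = kap n * r ^ (n:ℕ) := vol_cb n a hr.le
  have h1 : |⨍ z in B, u z| ≤ V⁻¹ * ∫ z in B, |u z| := by
    rw [setAverage_eq, smul_eq_mul, measureReal_def, ← hV, abs_mul, abs_of_nonneg (inv_nonneg.2 hV0.le)]
    apply mul_le_mul_of_nonneg_left _ (inv_nonneg.2 hV0.le)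
    rw [← Real.norm_eq_abs]
    exact (norm_integral_le_integral_norm _).trans (le_of_eq (by simp [Real.norm_eq_abs]))
  have h2 : ∫ z in B, |u z| ≤ P * V ^ (1/q) :=
    holder_set hpq hu.abs (fun z => abs_nonneg _) (isCompact_closedBall a r) hP0 hP
  refine h1.trans ((mul_le_mul_of_nonneg_left h2 (inv_nonneg.2 hV0.le)).trans (le_of_eq ?_))
  have e1 : V⁻¹ * V ^ (1/q) = V ^ (-(1/p)) := by
    rw [← Real.rpow_neg_one V, ← Real.rpow_add hV0]
    congr 1; linarith
  have e2 : V ^ (-(1/p)) = kap n ^ (-(1/p)) * r ^ (-((n:ℝ)/p)) := by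
    rw [hVeq, Real.mul_rpow (kap_pos n).le (by positivity), ← Real.rpow_natCast r n,
      ← Real.rpow_mul hr.le]
    congr 1
    rw [mul_neg, mul_one_div]
  calc V⁻¹ * (P * V ^ (1/q)) = V⁻¹ * V ^ (1/q) * P := by ring
    _ = kap n ^ (-(1/p)) * r ^ (-((n:ℝ)/p)) * P := by rw [e1, e2]

lemma jb_ge_one {n : ℕ} (x : Euc n) : 1 ≤ jbracket x := by
  rw [jbracket]
  calc (1:ℝ) = Real.sqrt 1 := Real.sqrt_one.symm
    _ ≤ Real.sqrt (1 + ‖x‖ ^ 2) := Real.sqrt_le_sqrt (by nlinarith [sq_nonneg ‖x‖])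

lemma jb_pos {n : ℕ} (x : Euc n) : 0 < jbracket x := lt_of_lt_of_le one_pos (jb_ge_one x)

lemma jb_le {n : ℕ} (y z : Euc n) : jbracket y ≤ jbracket z + ‖y - z‖ := by
  have h1 : ‖y‖ ≤ ‖z‖ + ‖y - z‖ := by
    have := norm_sub_norm_le y z
    linarith
  have hS : Real.sqrt (1 + ‖z‖ ^ 2) ^ 2 = 1 + ‖z‖ ^ 2 := Real.sq_sqrt (by positivity)
  have hS0 : 0 ≤ Real.sqrt (1 + ‖z‖ ^ 2) := Real.sqrt_nonneg _
  have hzS : ‖z‖ ≤ Real.sqrt (1 + ‖z‖ ^ 2) := by nlinarith [norm_nonneg z]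
  have key : Real.sqrt (1 + ‖y‖ ^ 2)
      ≤ Real.sqrt ((Real.sqrt (1 + ‖z‖ ^ 2) + ‖y - z‖) ^ 2) := by
    apply Real.sqrt_le_sqrt
    nlinarith [norm_nonneg (y - z), norm_nonneg y, norm_nonneg z]
  rw [Real.sqrt_sq (by positivity)] at key
  exact key

lemma jb_cont {n : ℕ} : Continuous (fun x : Euc n => jbracket x) := by
  unfold jbracket
  fun_prop

noncomputable def c0 (n : ℕ) (p : ℝ) : ℝ := p / (p - n) * kap n ^ (-(1/p))

noncomputable def Kdec (n : ℕ) (p lam : ℝ) : ℝ :=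
  (c0 n p + kap n ^ (-(1/p)) * (min ((3:ℝ) ^ lam) 1)⁻¹) * 2 ^ (lam + (n:ℝ)/p)

lemma est {n : ℕ} (hn : 0 < n) {p q lam : ℝ} (hpn : (n:ℝ) < p) (hpq : p.HolderConjugate q)
    (hlam : -((n:ℝ)/p) < lam) {u : Euc n → ℝ} (hu : ContDiff ℝ 1 u) {C : ℝ} (hC0 : 0 ≤ C)
    (hA : eLpNorm (fun x => jbracket x ^ lam * u x) (ENNReal.ofReal p) volume
      ≤ ENNReal.ofReal C)
    (hB : eLpNorm (fun x => jbracket x ^ (lam+1) * ‖fderiv ℝ u x‖) (ENNReal.ofReal p) volume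
      ≤ ENNReal.ofReal C) :
    (∀ x y : Euc n, |u x - u y| ≤ 5 * c0 n p * C * ‖x - y‖ ^ (1 - (n:ℝ)/p))
    ∧ (∀ x : Euc n, |u x| ≤ Kdec n p lam * C * jbracket x ^ (-(lam + (n:ℝ)/p))) := by
  have hp0 : 0 < p := hpq.pos
  have hq1 : 1/q = 1 - 1/p := by
    have := hpq.inv_add_inv_eq_one
    rw [one_div, one_div]; linarith
  have hn0 : (0:ℝ) < n := by exact_mod_cast hn
  have hnp1 : (n:ℝ)/p < 1 := (div_lt_one hp0).2 hpn
  have hl1 : 0 ≤ lam + 1 := by linarith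
  have hppn : 0 < p / (p - n) := by
    apply div_pos hp0; linarith
  have hc00 : 0 ≤ c0 n p := by
    unfold c0
    exact mul_nonneg hppn.le (Real.rpow_nonneg (kap_pos n).le _)
  have hgc : Continuous (fun z : Euc n => ‖fderiv ℝ u z‖) := (hu.continuous_fderiv one_ne_zero).norm
  have hjbc : Continuous (fun x : Euc n => jbracket x) := jb_cont
  have hfBm : AEStronglyMeasurable
      (fun x : Euc n => jbracket x ^ (lam+1) * ‖fderiv ℝ u x‖) volume :=
    ((hjbc.rpow_const (fun x => Or.inl (jb_pos x).ne')).mul hgc).aestronglyMeasurable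
  have hfAm : AEStronglyMeasurable (fun x : Euc n => jbracket x ^ lam * u x) volume :=
    ((hjbc.rpow_const (fun x => Or.inl (jb_pos x).ne')).mul hu.continuous).aestronglyMeasurable
  -- global derivative bound
  have hQglob : ∀ (c : Euc n) (R : ℝ), ∀ s : Set (Euc n), MeasurableSet s →
      s ⊆ closedBall c R → ∫ z in s, ‖fderiv ℝ u z‖ ^ p ≤ C ^ p := by
    intro c R s hs hsub
    have h := setint_le_of_elp hfBm hgc hp0 hC0 one_pos hs (isCompact_closedBall c R) hsub
      (fun z _ => ?_) hB
    · simpa [abs_norm] using h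
    · rw [one_mul, abs_norm,
        abs_of_nonneg (mul_nonneg (Real.rpow_nonneg (jb_pos z).le _) (norm_nonneg _))]
      have h1 : 1 ≤ jbracket z ^ (lam+1) := Real.one_le_rpow (jb_ge_one z) hl1
      nlinarith [norm_nonneg (fderiv ℝ u z)]
  constructor
  · -- Hölder estimate
    intro x y
    rcases eq_or_ne x y with rfl | hxy
    · simp only [sub_self, abs_zero, norm_zero]
      rw [Real.zero_rpow (by linarith)]
      simp
    · set r := ‖x - y‖ with hrdef
      have hr : 0 < r := norm_pos_iff.2 (sub_ne_zero.2 hxy)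
      have hy : y ∈ closedBall x (2*r) := by
        rw [mem_closedBall, dist_comm, dist_eq_norm]
        linarith
      have h1 := core hn hpn hpq hu (a := x) (x := x) (c := x) (r := 2*r) (R := 2*r)
        (by linarith) subset_rfl (mem_closedBall_self (by linarith)) hC0
        (by linarith : (0:ℝ) ≤ 2*r)
        (fun z hz => by rw [← dist_eq_norm]; exact mem_closedBall.1 hz)
        (hQglob x (2*r))
      have h2 := core hn hpn hpq hu (a := x) (x := y) (c := x) (r := 2*r) (R := 2*r)
        (by linarith) subset_rfl hy hC0 (by linarith : (0:ℝ) ≤ 3*r)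
        (fun z hz => by
          have hzx : ‖z - x‖ ≤ 2*r := by rw [← dist_eq_norm]; exact mem_closedBall.1 hz
          calc ‖z - y‖ ≤ ‖z - x‖ + ‖x - y‖ := norm_sub_le_norm_sub_add_norm_sub z x y
            _ ≤ 3*r := by rw [← hrdef]; linarith)
        (hQglob x (2*r))
      have hsum : |u x - u y| ≤ 5*r * (p/(p-n)) * kap n ^ (-(1/p)) * (2*r) ^ (-((n:ℝ)/p)) * C := by
        calc |u x - u y|
            ≤ |u x - (⨍ z in closedBall x (2*r), u z)|
              + |(⨍ z in closedBall x (2*r), u z) - u y| := abs_sub_le _ _ _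
          _ = |(⨍ z in closedBall x (2*r), u z) - u x|
              + |(⨍ z in closedBall x (2*r), u z) - u y| := by rw [abs_sub_comm]
          _ ≤ 2*r * (p/(p-n)) * kap n ^ (-(1/p)) * (2*r) ^ (-((n:ℝ)/p)) * C
              + 3*r * (p/(p-n)) * kap n ^ (-(1/p)) * (2*r) ^ (-((n:ℝ)/p)) * C :=
            add_le_add h1 h2
          _ = 5*r * (p/(p-n)) * kap n ^ (-(1/p)) * (2*r) ^ (-((n:ℝ)/p)) * C := by ring
      have hmono : (2*r) ^ (-((n:ℝ)/p)) ≤ r ^ (-((n:ℝ)/p)) :=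
        Real.rpow_le_rpow_of_nonpos hr (by linarith) (neg_nonpos.2 (by positivity))
      refine hsum.trans ?_
      have : 5*r * (p/(p-n)) * kap n ^ (-(1/p)) * (2*r) ^ (-((n:ℝ)/p)) * C
          ≤ 5*r * (p/(p-n)) * kap n ^ (-(1/p)) * r ^ (-((n:ℝ)/p)) * C := by
        apply mul_le_mul_of_nonneg_right _ hC0
        apply mul_le_mul_of_nonneg_left hmono
        exact mul_nonneg (mul_nonneg (by positivity : (0:ℝ) ≤ 5*r) hppn.le)
          (Real.rpow_nonneg (kap_pos n).le _)
      refine this.trans (le_of_eq ?_)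
      rw [c0]
      rw [show (1 - (n:ℝ)/p) = 1 + (-((n:ℝ)/p)) by ring, Real.rpow_add hr, Real.rpow_one]
      ring
  · -- decay estimate
    intro x
    set R : ℝ := jbracket x / 2 with hRdef
    have hR0 : 0 < R := by rw [hRdef]; linarith [jb_pos x, jb_ge_one x]
    have hjx : jbracket x = 2*R := by rw [hRdef]; ring
    have hlow : ∀ z ∈ closedBall x R, R ≤ jbracket z := by
      intro z hz
      have h := jb_le x z
      have hxz : ‖x - z‖ ≤ R := by rw [← dist_eq_norm]; exact mem_closedBall'.1 hz
      rw [hjx] at h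
      linarith
    have hup : ∀ z ∈ closedBall x R, jbracket z ≤ 3*R := by
      intro z hz
      have h := jb_le z x
      have hzx : ‖z - x‖ ≤ R := by rw [← dist_eq_norm]; exact mem_closedBall.1 hz
      rw [hjx] at h
      linarith
    set m3 : ℝ := min ((3:ℝ) ^ lam) 1 with hm3def
    have hm3 : 0 < m3 := lt_min (Real.rpow_pos_of_pos (by norm_num) lam) one_pos
    -- derivative bound on the ball
    have hQR : ∀ s : Set (Euc n), MeasurableSet s → s ⊆ closedBall x R →
        ∫ z in s, ‖fderiv ℝ u z‖ ^ p ≤ (C / R ^ (lam+1)) ^ p := by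
      intro s hs hsub
      have h := setint_le_of_elp hfBm hgc hp0 hC0
        (Real.rpow_pos_of_pos hR0 (lam+1)) hs (isCompact_closedBall x R) hsub
        (fun z hz => ?_) hB
      · simpa [abs_norm] using h
      · rw [abs_norm,
          abs_of_nonneg (mul_nonneg (Real.rpow_nonneg (jb_pos z).le _) (norm_nonneg _))]
        exact mul_le_mul_of_nonneg_right
          (Real.rpow_le_rpow hR0.le (hlow z (hsub hz)) hl1) (norm_nonneg _)
    -- u bound on the ball
    have hPR : ∫ z in closedBall x R, |u z| ^ p ≤ (C / (m3 * R ^ lam)) ^ p := by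
      apply setint_le_of_elp hfAm hu.continuous hp0 hC0
        (mul_pos hm3 (Real.rpow_pos_of_pos hR0 lam)) measurableSet_closedBall (isCompact_closedBall x R) subset_rfl
        (fun z hz => ?_) hA
      rw [abs_mul, abs_of_nonneg (Real.rpow_nonneg (jb_pos z).le lam)]
      apply mul_le_mul_of_nonneg_right _ (abs_nonneg (u z))
      rcases le_or_gt 0 lam with hl0 | hl0
      · have : R ^ lam ≤ jbracket z ^ lam := Real.rpow_le_rpow hR0.le (hlow z hz) hl0
        have hm31 : m3 ≤ 1 := min_le_right _ _
        nlinarith [Real.rpow_nonneg hR0.le lam]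
      · have h3 : (3*R) ^ lam ≤ jbracket z ^ lam :=
          Real.rpow_le_rpow_of_nonpos (jb_pos z) (hup z hz) hl0.le
        have he : m3 * R ^ lam = (3*R) ^ lam := by
          rw [Real.mul_rpow (by norm_num) hR0.le, hm3def,
            min_eq_left (Real.rpow_le_one_of_one_le_of_nonpos (by norm_num) hl0.le)]
        rw [he]
        exact h3
    have h1 := core hn hpn hpq hu (a := x) (x := x) (c := x) (r := R) (R := R) hR0
      subset_rfl (mem_closedBall_self hR0.le)
      (div_nonneg hC0 (Real.rpow_pos_of_pos hR0 _).le) hR0.le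
      (fun z hz => by rw [← dist_eq_norm]; exact mem_closedBall.1 hz) hQR
    have h2 := avg_bound hpq hq1 hu.continuous hR0
      (div_nonneg hC0 (mul_pos hm3 (Real.rpow_pos_of_pos hR0 lam)).le) hPR
    have hcomb : |u x| ≤ kap n ^ (-(1/p)) * R ^ (-((n:ℝ)/p)) * (C / (m3 * R ^ lam))
        + R * (p/(p-n)) * kap n ^ (-(1/p)) * R ^ (-((n:ℝ)/p)) * (C / R ^ (lam+1)) := by
      have he : u x = (⨍ z in closedBall x R, u z)
          - ((⨍ z in closedBall x R, u z) - u x) := by ring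
      calc |u x| = |(⨍ z in closedBall x R, u z)
          - ((⨍ z in closedBall x R, u z) - u x)| := by rw [← he]
        _ ≤ |⨍ z in closedBall x R, u z| + |(⨍ z in closedBall x R, u z) - u x| :=
            abs_sub _ _
        _ ≤ _ := add_le_add h2 h1
    have e1 : R * R ^ (-((n:ℝ)/p)) * (R ^ (lam+1))⁻¹ = R ^ (-(lam + (n:ℝ)/p)) := by
      rw [← Real.rpow_neg hR0.le, show R * R ^ (-((n:ℝ)/p)) = R ^ (1 + -((n:ℝ)/p)) by
        rw [Real.rpow_add hR0, Real.rpow_one], ← Real.rpow_add hR0]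
      congr 1; ring
    have e2 : R ^ (-((n:ℝ)/p)) * (R ^ lam)⁻¹ = R ^ (-(lam + (n:ℝ)/p)) := by
      rw [← Real.rpow_neg hR0.le, ← Real.rpow_add hR0]; congr 1; ring
    have hconv : R ^ (-(lam + (n:ℝ)/p))
        = 2 ^ (lam + (n:ℝ)/p) * jbracket x ^ (-(lam + (n:ℝ)/p)) := by
      rw [hRdef, Real.div_rpow (jb_pos x).le (by norm_num : (0:ℝ) ≤ 2), div_eq_mul_inv,
        ← Real.rpow_neg (by norm_num : (0:ℝ) ≤ 2), neg_neg]
      ring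
    have key : kap n ^ (-(1/p)) * R ^ (-((n:ℝ)/p)) * (C / (m3 * R ^ lam))
        + R * (p/(p-n)) * kap n ^ (-(1/p)) * R ^ (-((n:ℝ)/p)) * (C / R ^ (lam+1))
        = (c0 n p + kap n ^ (-(1/p)) * m3⁻¹) * C * R ^ (-(lam + (n:ℝ)/p)) := by
      have hexp : (c0 n p + kap n ^ (-(1/p)) * m3⁻¹) * C * R ^ (-(lam + (n:ℝ)/p))
          = c0 n p * C * (R * R ^ (-((n:ℝ)/p)) * (R ^ (lam+1))⁻¹)
            + kap n ^ (-(1/p)) * m3⁻¹ * C * (R ^ (-((n:ℝ)/p)) * (R ^ lam)⁻¹) := by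
        rw [e1, e2]; ring
      rw [hexp, c0, div_eq_mul_inv C (m3 * R ^ lam), mul_inv,
        div_eq_mul_inv C (R ^ (lam+1))]
      ring
    refine hcomb.trans (le_of_eq ?_)
    rw [key, hconv]
    simp only [Kdec, ← hm3def]
    ring

lemma c0_nonneg {n : ℕ} {p : ℝ} (hpn : (n:ℝ) < p) (hp0 : 0 < p) : 0 ≤ c0 n p := by
  unfold c0
  exact mul_nonneg (div_pos hp0 (by linarith)).le (Real.rpow_nonneg (kap_pos n).le _)

lemma Kdec_nonneg {n : ℕ} {p lam : ℝ} (hpn : (n:ℝ) < p) (hp0 : 0 < p) :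
    0 ≤ Kdec n p lam := by
  unfold Kdec
  apply mul_nonneg
  · apply add_nonneg (c0_nonneg hpn hp0)
    exact mul_nonneg (Real.rpow_nonneg (kap_pos n).le _)
      (inv_nonneg.2 (lt_min (Real.rpow_pos_of_pos (by norm_num) _) one_pos).le)
  · exact Real.rpow_nonneg (by norm_num) _

lemma jb_ge_norm {n : ℕ} (x : Euc n) : ‖x‖ ≤ jbracket x := by
  rw [jbracket]
  calc ‖x‖ = Real.sqrt (‖x‖ ^ 2) := (Real.sqrt_sq (norm_nonneg x)).symm
    _ ≤ Real.sqrt (1 + ‖x‖ ^ 2) := Real.sqrt_le_sqrt (by linarith)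

end WSCE

open WSCE

/-- **Compactness of the weighted Sobolev embedding.** Let `n ∈ ℕ`, `n < p < ∞`, and
`λ > -n/p`. Then every sequence of continuously differentiable functions `u_ν : ℝⁿ → ℝ` with
`sup_ν (‖⟨·⟩^λ u_ν‖_{L^p} + ‖⟨·⟩^{λ+1} ‖Du_ν‖‖_{L^p}) < ∞` has a subsequence converging
uniformly on `ℝⁿ` to a bounded continuous function. -/
theorem weighted_sobolev_compact_embedding (n : ℕ) (hn : 0 < n) (p lam : ℝ)
    (hp : (n : ℝ) < p) (hlam : -(n / p) < lam)
    (us : ℕ → EuclideanSpace ℝ (Fin n) → ℝ) (hC1 : ∀ ν, ContDiff ℝ 1 (us ν))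
    (hbdd : (⨆ ν : ℕ,
        (eLpNorm (fun x => jbracket x ^ lam * us ν x) (ENNReal.ofReal p) volume
          + eLpNorm (fun x => jbracket x ^ (lam + 1) * ‖fderiv ℝ (us ν) x‖)
              (ENNReal.ofReal p) volume)) < ⊤) :
    ∃ φ : ℕ → ℕ, StrictMono φ ∧ ∃ u : EuclideanSpace ℝ (Fin n) → ℝ,
      Continuous u ∧ (∃ M : ℝ, ∀ x, |u x| ≤ M) ∧
      TendstoUniformly (fun j => us (φ j)) u Filter.atTop := by

  classical
  have hn0 : (0:ℝ) < n := by exact_mod_cast hn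
  have hp1 : (1:ℝ) < p := lt_of_le_of_lt (by exact_mod_cast hn) hp
  have hp0 : (0:ℝ) < p := by linarith
  have hpq : p.HolderConjugate p.conjExponent := Real.HolderConjugate.conjExponent hp1
  set C : ℝ := (⨆ ν : ℕ,
      (eLpNorm (fun x => jbracket x ^ lam * us ν x) (ENNReal.ofReal p) volume
        + eLpNorm (fun x => jbracket x ^ (lam + 1) * ‖fderiv ℝ (us ν) x‖)
            (ENNReal.ofReal p) volume)).toReal with hCdef
  have hC0 : 0 ≤ C := ENNReal.toReal_nonneg
  have hAν : ∀ ν, eLpNorm (fun x => jbracket x ^ lam * us ν x) (ENNReal.ofReal p) volume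
      ≤ ENNReal.ofReal C := by
    intro ν
    rw [hCdef, ENNReal.ofReal_toReal hbdd.ne]
    exact le_trans (self_le_add_right _ _)
      (le_iSup (fun ν : ℕ => eLpNorm (fun x => jbracket x ^ lam * us ν x)
          (ENNReal.ofReal p) volume
        + eLpNorm (fun x => jbracket x ^ (lam + 1) * ‖fderiv ℝ (us ν) x‖)
          (ENNReal.ofReal p) volume) ν)
  have hBν : ∀ ν, eLpNorm (fun x => jbracket x ^ (lam + 1) * ‖fderiv ℝ (us ν) x‖)
      (ENNReal.ofReal p) volume ≤ ENNReal.ofReal C := by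
    intro ν
    rw [hCdef, ENNReal.ofReal_toReal hbdd.ne]
    exact le_trans (self_le_add_left _ _)
      (le_iSup (fun ν : ℕ => eLpNorm (fun x => jbracket x ^ lam * us ν x)
          (ENNReal.ofReal p) volume
        + eLpNorm (fun x => jbracket x ^ (lam + 1) * ‖fderiv ℝ (us ν) x‖)
          (ENNReal.ofReal p) volume) ν)
  have hest := fun ν => est hn hp hpq hlam (hC1 ν) hC0 (hAν ν) (hBν ν)
  set K : ℝ := 5 * c0 n p * C with hKdef
  have hK0 : 0 ≤ K := by
    rw [hKdef]
    exact mul_nonneg (mul_nonneg (by norm_num) (c0_nonneg hp hp0)) hC0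
  set M : ℝ := Kdec n p lam * C with hMdef
  have hM0 : 0 ≤ M := mul_nonneg (Kdec_nonneg hp hp0) hC0
  set al : ℝ := 1 - (n:ℝ)/p with hal
  have hal0 : 0 < al := by
    rw [hal]; rw [sub_pos, div_lt_one hp0]; exact hp
  set ep : ℝ := lam + (n:ℝ)/p with hep
  have hep0 : 0 < ep := by rw [hep]; linarith
  have hHol : ∀ ν x y, |us ν x - us ν y| ≤ K * ‖x - y‖ ^ al := fun ν => (hest ν).1
  have hDec : ∀ ν x, |us ν x| ≤ M * jbracket x ^ (-ep) := fun ν => (hest ν).2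
  have hbound : ∀ ν x, |us ν x| ≤ M := by
    intro ν x
    refine (hDec ν x).trans ?_
    have h1 : jbracket x ^ (-ep) ≤ 1 :=
      Real.rpow_le_one_of_one_le_of_nonpos (jb_ge_one x) (by linarith)
    calc M * jbracket x ^ (-ep) ≤ M * 1 := mul_le_mul_of_nonneg_left h1 hM0
      _ = M := mul_one M
  obtain ⟨d, hd⟩ := TopologicalSpace.exists_dense_seq (EuclideanSpace ℝ (Fin n))
  have hmem : ∀ ν, (fun i => us ν (d i)) ∈ Set.univ.pi (fun _ : ℕ => Set.Icc (-M) M) := by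
    intro ν
    rw [Set.mem_univ_pi]
    intro i
    rw [Set.mem_Icc]
    constructor
    · linarith [abs_le.1 (hbound ν (d i)) |>.1]
    · exact (abs_le.1 (hbound ν (d i))).2
  obtain ⟨aℓ, -, φ, hφmono, hconv⟩ :=
    (isCompact_univ_pi (fun _ : ℕ => isCompact_Icc)).tendsto_subseq hmem
  have hpt : ∀ i, CauchySeq (fun j => us (φ j) (d i)) := by
    intro i
    exact ((tendsto_pi_nhds.1 hconv) i).cauchySeq
  set V : ℕ → BoundedContinuousFunction (EuclideanSpace ℝ (Fin n)) ℝ := fun j =>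
    BoundedContinuousFunction.mkOfBound ⟨us (φ j), (hC1 (φ j)).continuous⟩ (2*M)
      (fun x y => by
        rw [Real.dist_eq]
        have := abs_sub (us (φ j) x) (us (φ j) y)
        have h1 := hbound (φ j) x
        have h2 := hbound (φ j) y
        simp only [ContinuousMap.coe_mk]
        linarith) with hVdef
  have hcauchy : CauchySeq V := by
    rw [Metric.cauchySeq_iff]
    intro ε hε
    set T : ℝ := max 1 ((8*M/ε + 1) ^ (1/ep)) with hT
    have hT1 : (1:ℝ) ≤ T := le_max_left _ _
    have hT0 : (0:ℝ) < T := lt_of_lt_of_le one_pos hT1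
    have htail : ∀ ν, ∀ x : EuclideanSpace ℝ (Fin n), T ≤ ‖x‖ → |us ν x| ≤ ε/8 := by
      intro ν x hx
      have hjb : T ≤ jbracket x := le_trans hx (jb_ge_norm x)
      have h1 : jbracket x ^ (-ep) ≤ T ^ (-ep) :=
        Real.rpow_le_rpow_of_nonpos hT0 hjb (by linarith)
      have h2 : M * T ^ (-ep) ≤ ε/8 := by
        have hbase : (0:ℝ) < 8*M/ε + 1 := by positivity
        have h3 : 8*M/ε + 1 ≤ T ^ ep := by
          calc 8*M/ε + 1 = ((8*M/ε + 1) ^ (1/ep)) ^ ep := by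
                rw [← Real.rpow_mul hbase.le, one_div, inv_mul_cancel₀ hep0.ne',
                  Real.rpow_one]
            _ ≤ T ^ ep := Real.rpow_le_rpow (Real.rpow_nonneg hbase.le _)
                (le_max_right _ _) hep0.le
        have hTε : (0:ℝ) < T ^ ep := Real.rpow_pos_of_pos hT0 _
        rw [Real.rpow_neg hT0.le, ← div_eq_mul_inv, div_le_iff₀ hTε]
        have heq : ε/8 * (8*M/ε + 1) = M + ε/8 := by field_simp
        nlinarith
      calc |us ν x| ≤ M * jbracket x ^ (-ep) := hDec ν x
        _ ≤ M * T ^ (-ep) := mul_le_mul_of_nonneg_left h1 hM0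
        _ ≤ ε/8 := h2
    set δ : ℝ := (ε/(8*(K+1))) ^ (1/al) with hδ
    have hδ0 : 0 < δ := Real.rpow_pos_of_pos (by positivity) _
    have hδα : K * δ ^ al ≤ ε/8 := by
      have hδal : δ ^ al = ε/(8*(K+1)) := by
        rw [hδ, ← Real.rpow_mul (by positivity : (0:ℝ) ≤ ε/(8*(K+1))), one_div,
          inv_mul_cancel₀ hal0.ne', Real.rpow_one]
      rw [hδal]
      rw [mul_div_assoc']
      rw [div_le_div_iff₀ (by positivity) (by norm_num : (0:ℝ) < 8)]
      nlinarith
    have hcov : Metric.closedBall (0 : EuclideanSpace ℝ (Fin n)) T ⊆ ⋃ i, Metric.ball (d i) δ := by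
      intro x _
      obtain ⟨i, hi⟩ := hd.exists_dist_lt x hδ0
      exact Set.mem_iUnion.2 ⟨i, Metric.mem_ball.2 hi⟩
    obtain ⟨t, ht⟩ := (isCompact_closedBall (0 : EuclideanSpace ℝ (Fin n)) T).elim_finite_subcover
      _ (fun i => Metric.isOpen_ball) hcov
    have hNc : ∀ i : ℕ, ∃ N, ∀ j ≥ N, ∀ k ≥ N,
        dist (us (φ j) (d i)) (us (φ k) (d i)) < ε/8 :=
      fun i => Metric.cauchySeq_iff.1 (hpt i) _ (by positivity)
    choose Nf hNf using hNc
    refine ⟨t.sup Nf, fun j hj k hk => ?_⟩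
    have hjk : ∀ x, dist (us (φ j) x) (us (φ k) x) ≤ ε/2 := by
      intro x
      rcases le_or_gt ‖x‖ T with hxT | hxT
      · have hxmem : x ∈ Metric.closedBall (0 : EuclideanSpace ℝ (Fin n)) T := by
          rw [Metric.mem_closedBall, dist_zero_right]; exact hxT
        obtain ⟨i, hit, hxi⟩ := Set.mem_iUnion₂.1 (ht hxmem)
        have hdi : ‖x - d i‖ < δ := by
          rw [← dist_eq_norm]; exact Metric.mem_ball.1 hxi
        have hH : ∀ ν, |us ν x - us ν (d i)| ≤ ε/8 := by
          intro ν
          refine (hHol ν x (d i)).trans ?_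
          calc K * ‖x - d i‖ ^ al ≤ K * δ ^ al :=
                mul_le_mul_of_nonneg_left
                  (Real.rpow_le_rpow (norm_nonneg _) hdi.le hal0.le) hK0
            _ ≤ ε/8 := hδα
        have hmid : |us (φ j) (d i) - us (φ k) (d i)| < ε/8 := by
          rw [← Real.dist_eq]
          exact hNf i j (le_trans (Finset.le_sup hit) hj) k (le_trans (Finset.le_sup hit) hk)
        rw [Real.dist_eq]
        have e1 : |us (φ j) x - us (φ k) x|
            ≤ |us (φ j) x - us (φ j) (d i)| + |us (φ j) (d i) - us (φ k) x| :=
          abs_sub_le _ _ _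
        have e2 : |us (φ j) (d i) - us (φ k) x|
            ≤ |us (φ j) (d i) - us (φ k) (d i)| + |us (φ k) (d i) - us (φ k) x| :=
          abs_sub_le _ _ _
        have e3 := hH (φ j)
        have e4 : |us (φ k) (d i) - us (φ k) x| ≤ ε/8 := by
          rw [abs_sub_comm]; exact hH (φ k)
        linarith
      · have h1 := htail (φ j) x hxT.le
        have h2 := htail (φ k) x hxT.le
        rw [Real.dist_eq]
        have := abs_sub (us (φ j) x) (us (φ k) x)
        linarith
    have hd2 : dist (V j) (V k) ≤ ε/2 :=
      (BoundedContinuousFunction.dist_le (by positivity)).2 hjk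
    linarith
  obtain ⟨U, hU⟩ := cauchySeq_tendsto_of_complete hcauchy
  refine ⟨φ, hφmono, U, U.continuous, ⟨‖U‖, fun x => ?_⟩, ?_⟩
  · have := U.norm_coe_le_norm x
    rwa [Real.norm_eq_abs] at this
  · exact BoundedContinuousFunction.tendsto_iff_tendstoUniformly.1 hU
end

section
/- Let n ∈ ℕ, 1 < p < ∞, λ ∈ ℝ, and let f : ℝⁿ → ℝ be a bounded measurable function such that the essential supremum of |f| over {x : |x| ≥ i} tends to 0 as i → ∞. Then for every sequence of continuously differentiable functions u_ν : ℝⁿ → ℝ with sup_ν (‖⟨·⟩^λ u_ν‖_{L^p(ℝⁿ)} + ‖⟨·⟩^λ ‖Du_ν‖‖_{L^p(ℝⁿ)}) < ∞ there exist a subsequence (ν_j) and a measurable function v : ℝⁿ → ℝ with ‖⟨·⟩^λ v‖_{L^p(ℝⁿ)} < ∞, such that ‖⟨·⟩^λ (f·u_{ν_j} - v)‖_{L^p(ℝⁿ)} → 0 as j → ∞. -/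
set_option maxHeartbeats 1600000
set_option synthInstance.maxHeartbeats 400000

open MeasureTheory
open scoped ENNReal

theorem AUXJ {α : Type*} [MeasurableSpace α] (μ : Measure α) {p q : ℝ}
    (hpq : p.HolderConjugate q) {ρ F : α → ℝ≥0∞}
    (hρ : AEMeasurable ρ μ) (hF : AEMeasurable F μ) (hρ1 : ∫⁻ a, ρ a ∂μ = 1) :
    (∫⁻ a, ρ a * F a ∂μ) ^ p ≤ ∫⁻ a, ρ a * F a ^ p ∂μ := by
  have hp0 : (0:ℝ) < p := hpq.pos
  have hq0 : (0:ℝ) < q := hpq.symm.pos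
  have key : ∫⁻ a, ρ a * F a ∂μ ≤ (∫⁻ a, ρ a * F a ^ p ∂μ) ^ (1/p) := by
    have h1 : ∀ a, ρ a * F a = ((fun a => ρ a ^ (1/p) * F a) * (fun a => ρ a ^ (1/q))) a := by
      intro a
      simp only [Pi.mul_apply]
      rw [mul_comm (ρ a ^ (1/p)) (F a), mul_assoc, ← ENNReal.rpow_add_of_nonneg _ _
        (by positivity) (by positivity),
        show (1/p + 1/q : ℝ) = 1 by rw [one_div, one_div, hpq.inv_add_inv_eq_one],
        ENNReal.rpow_one, mul_comm]
    calc ∫⁻ a, ρ a * F a ∂μ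
        = ∫⁻ a, ((fun a => ρ a ^ (1/p) * F a) * (fun a => ρ a ^ (1/q))) a ∂μ := by
          exact lintegral_congr h1
      _ ≤ (∫⁻ a, (ρ a ^ (1/p) * F a) ^ p ∂μ) ^ (1/p) * (∫⁻ a, (ρ a ^ (1/q)) ^ q ∂μ) ^ (1/q) :=
          ENNReal.lintegral_mul_le_Lp_mul_Lq μ hpq ((hρ.pow_const _).mul hF) (hρ.pow_const _)
      _ = (∫⁻ a, ρ a * F a ^ p ∂μ) ^ (1/p) := by
          have e1 : ∀ a, (ρ a ^ (1/p) * F a) ^ p = ρ a * F a ^ p := by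
            intro a
            rw [ENNReal.mul_rpow_of_nonneg _ _ hp0.le, ← ENNReal.rpow_mul,
              one_div_mul_cancel hp0.ne', ENNReal.rpow_one]
          have e2 : ∀ a, (ρ a ^ (1/q)) ^ q = ρ a := by
            intro a
            rw [← ENNReal.rpow_mul, one_div_mul_cancel hq0.ne', ENNReal.rpow_one]
          rw [lintegral_congr e1, lintegral_congr e2, hρ1, ENNReal.one_rpow, mul_one]
  calc (∫⁻ a, ρ a * F a ∂μ) ^ p ≤ ((∫⁻ a, ρ a * F a ^ p ∂μ) ^ (1/p)) ^ p :=
        ENNReal.rpow_le_rpow key hp0.le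
    _ = ∫⁻ a, ρ a * F a ^ p ∂μ := by
        rw [← ENNReal.rpow_mul, one_div_mul_cancel hp0.ne', ENNReal.rpow_one]

theorem AUXT {n : ℕ} {p q : ℝ} (hpq : p.HolderConjugate q)
    (g : EuclideanSpace ℝ (Fin n) → ℝ) (hg : ContDiff ℝ 1 g) (h : EuclideanSpace ℝ (Fin n)) :
    ∫⁻ x, (‖g (x + h) - g x‖₊ : ℝ≥0∞) ^ p ≤
      (ENNReal.ofReal ‖h‖) ^ p * ∫⁻ x, (‖fderiv ℝ g x‖₊ : ℝ≥0∞) ^ p := by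
  have hp0 : (0:ℝ) < p := hpq.pos
  have hD : Continuous (fun y => fderiv ℝ g y) := hg.continuous_fderiv one_ne_zero
  -- pointwise FTC bound
  have hpt : ∀ x : EuclideanSpace ℝ (Fin n), (‖g (x + h) - g x‖₊ : ℝ≥0∞) ≤
      ∫⁻ t in Set.Ioc (0:ℝ) 1, ENNReal.ofReal (‖fderiv ℝ g (x + t • h)‖ * ‖h‖) := by
    intro x
    have hcont : Continuous fun t : ℝ => (fderiv ℝ g (x + t • h)) h := by
      exact (hD.comp (continuous_const.add (continuous_id.smul continuous_const))).clm_apply continuous_const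
    have hcont2 : Continuous fun t : ℝ => ‖fderiv ℝ g (x + t • h)‖ * ‖h‖ := by
      exact ((hD.comp (continuous_const.add (continuous_id.smul continuous_const))).norm).mul continuous_const
    have hderiv : ∀ t ∈ Set.uIcc (0:ℝ) 1,
        HasDerivAt (fun t : ℝ => g (x + t • h)) ((fderiv ℝ g (x + t • h)) h) t := by
      intro t _
      have h1 : HasFDerivAt g (fderiv ℝ g (x + t • h)) (x + t • h) :=
        (hg.differentiable one_ne_zero _).hasFDerivAt
      have h2 : HasDerivAt (fun s : ℝ => x + s • h) h t := by
        simpa using ((hasDerivAt_id t).smul_const h).const_add x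
      exact h1.comp_hasDerivAt t h2
    have heq : g (x + h) - g x = ∫ t in (0:ℝ)..1, (fderiv ℝ g (x + t • h)) h := by
      rw [intervalIntegral.integral_eq_sub_of_hasDerivAt hderiv
        (hcont.intervalIntegrable _ _)]
      simp
    have hnorm : ‖g (x + h) - g x‖ ≤ ∫ t in Set.Ioc (0:ℝ) 1, ‖fderiv ℝ g (x + t • h)‖ * ‖h‖ := by
      rw [heq, ← intervalIntegral.integral_of_le (zero_le_one)]
      refine (intervalIntegral.norm_integral_le_integral_norm zero_le_one).trans ?_
      refine intervalIntegral.integral_mono_on zero_le_one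
        (hcont.norm.intervalIntegrable _ _) (hcont2.intervalIntegrable _ _) ?_
      intro t _
      exact (fderiv ℝ g (x + t • h)).le_opNorm h
    calc (‖g (x + h) - g x‖₊ : ℝ≥0∞) = ENNReal.ofReal ‖g (x + h) - g x‖ :=
          (ofReal_norm _).symm
      _ ≤ ENNReal.ofReal (∫ t in Set.Ioc (0:ℝ) 1, ‖fderiv ℝ g (x + t • h)‖ * ‖h‖) :=
          ENNReal.ofReal_le_ofReal hnorm
      _ = ∫⁻ t in Set.Ioc (0:ℝ) 1, ENNReal.ofReal (‖fderiv ℝ g (x + t • h)‖ * ‖h‖) := by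
          refine ofReal_integral_eq_lintegral_ofReal ?_ ?_
          · exact (hcont2.integrableOn_Ioc)
          · filter_upwards with t
            positivity
  -- Jensen
  have hmeas1 : ∀ t : ℝ, Measurable fun x : EuclideanSpace ℝ (Fin n) =>
      ENNReal.ofReal (‖fderiv ℝ g (x + t • h)‖ * ‖h‖) ^ p := by
    intro t
    exact (ENNReal.continuous_rpow_const.comp (ENNReal.continuous_ofReal.comp
      ((hD.comp (continuous_id.add continuous_const)).norm.mul continuous_const))).measurable
  have hpt2 : ∀ x : EuclideanSpace ℝ (Fin n), (‖g (x + h) - g x‖₊ : ℝ≥0∞) ^ p ≤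
      ∫⁻ t in Set.Ioc (0:ℝ) 1, ENNReal.ofReal (‖fderiv ℝ g (x + t • h)‖ * ‖h‖) ^ p := by
    intro x
    have h1 := ENNReal.rpow_le_rpow (hpt x) hp0.le
    refine h1.trans ?_
    have h2 := AUXJ (volume.restrict (Set.Ioc (0:ℝ) 1)) hpq
      (ρ := fun _ => 1) (F := fun t => ENNReal.ofReal (‖fderiv ℝ g (x + t • h)‖ * ‖h‖))
      aemeasurable_const
      (by exact (ENNReal.continuous_ofReal.comp ((hD.comp (continuous_const.add (continuous_id.smul continuous_const))).norm.mul
        continuous_const)).measurable.aemeasurable)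
      (by simp [Real.volume_Ioc])
    simpa using h2
  calc ∫⁻ x, (‖g (x + h) - g x‖₊ : ℝ≥0∞) ^ p
      ≤ ∫⁻ x, ∫⁻ t in Set.Ioc (0:ℝ) 1,
          ENNReal.ofReal (‖fderiv ℝ g (x + t • h)‖ * ‖h‖) ^ p ∂volume := lintegral_mono hpt2
    _ = ∫⁻ t in Set.Ioc (0:ℝ) 1, ∫⁻ x,
          ENNReal.ofReal (‖fderiv ℝ g (x + t • h)‖ * ‖h‖) ^ p ∂volume ∂volume := by
        refine lintegral_lintegral_swap ?_
        refine Measurable.aemeasurable ?_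
        have : Continuous fun z : EuclideanSpace ℝ (Fin n) × ℝ =>
            ENNReal.ofReal (‖fderiv ℝ g (z.1 + z.2 • h)‖ * ‖h‖) ^ p := by
          refine ENNReal.continuous_rpow_const.comp (ENNReal.continuous_ofReal.comp ?_)
          exact ((hD.comp (continuous_fst.add (continuous_snd.smul continuous_const))).norm).mul
            continuous_const
        exact this.measurable
    _ = ∫⁻ _ in Set.Ioc (0:ℝ) 1,
          ((ENNReal.ofReal ‖h‖) ^ p * ∫⁻ x, (‖fderiv ℝ g x‖₊ : ℝ≥0∞) ^ p) ∂volume := by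
        refine lintegral_congr fun t => ?_
        have e1 : ∀ x : EuclideanSpace ℝ (Fin n),
            ENNReal.ofReal (‖fderiv ℝ g (x + t • h)‖ * ‖h‖) ^ p =
            (ENNReal.ofReal ‖h‖) ^ p * (‖fderiv ℝ g (x + t • h)‖₊ : ℝ≥0∞) ^ p := by
          intro x
          rw [ENNReal.ofReal_mul (norm_nonneg _), ENNReal.mul_rpow_of_nonneg _ _ hp0.le,
            ofReal_norm, enorm_eq_nnnorm, mul_comm]
        rw [lintegral_congr e1, lintegral_const_mul]
        · congr 1
          exact lintegral_add_right_eq_self (fun y => (‖fderiv ℝ g y‖₊ : ℝ≥0∞) ^ p) (t • h)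
        · exact (ENNReal.continuous_rpow_const.comp (ENNReal.continuous_coe_iff.2
            ((hD.comp (continuous_id.add continuous_const)).nnnorm))).measurable
    _ = (ENNReal.ofReal ‖h‖) ^ p * ∫⁻ x, (‖fderiv ℝ g x‖₊ : ℝ≥0∞) ^ p := by
        rw [lintegral_const, Measure.restrict_apply_univ, Real.volume_Ioc]
        simp

noncomputable def AUXconv {n : ℕ} (g ρ : EuclideanSpace ℝ (Fin n) → ℝ)
    (x : EuclideanSpace ℝ (Fin n)) : ℝ := ∫ t, g t * ρ (x - t)

theorem AUXconv_eq {n : ℕ} (g ρ : EuclideanSpace ℝ (Fin n) → ℝ) (x : EuclideanSpace ℝ (Fin n)) :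
    AUXconv g ρ x = ∫ s, ρ s * g (x - s) := by
  have := integral_sub_left_eq_self (fun s => ρ s * g (x - s)) volume x
  rw [AUXconv, ← this]
  refine integral_congr_ae (Filter.Eventually.of_forall fun t => ?_)
  simp [mul_comm, sub_sub_cancel]

theorem AUXconv_bound {n : ℕ} {g ρ : EuclideanSpace ℝ (Fin n) → ℝ} {Cρ : ℝ}
    (hgi : Integrable g) (hρc : Continuous ρ) (hρb : ∀ s, |ρ s| ≤ Cρ)
    (x : EuclideanSpace ℝ (Fin n)) :
    |AUXconv g ρ x| ≤ Cρ * ∫ t, |g t| := by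
  rw [AUXconv, ← Real.norm_eq_abs]
  calc ‖∫ t, g t * ρ (x - t)‖ ≤ ∫ t, |g t| * Cρ := by
        refine norm_integral_le_of_norm_le (hgi.abs.mul_const Cρ) ?_
        filter_upwards with t
        rw [Real.norm_eq_abs, abs_mul]
        have h0 : (0:ℝ) ≤ Cρ := le_trans (abs_nonneg _) (hρb x)
        exact mul_le_mul le_rfl (hρb _) (abs_nonneg _) (abs_nonneg _)
    _ = Cρ * ∫ t, |g t| := by rw [integral_mul_const, mul_comm]

theorem AUXint {n : ℕ} {g ρ : EuclideanSpace ℝ (Fin n) → ℝ} {Cρ : ℝ}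
    (hgi : Integrable g) (hρc : Continuous ρ) (hρb : ∀ s, |ρ s| ≤ Cρ)
    (z : EuclideanSpace ℝ (Fin n)) : Integrable fun t => g t * ρ (z - t) := by
  refine Integrable.mono' (hgi.abs.mul_const Cρ) ?_ ?_
  · exact (hgi.aestronglyMeasurable.mul
      ((hρc.comp (continuous_const.sub continuous_id)).aestronglyMeasurable))
  · filter_upwards with t
    rw [Real.norm_eq_abs, abs_mul]
    exact mul_le_mul le_rfl (hρb _) (abs_nonneg _) (abs_nonneg _)

theorem AUXconv_lip {n : ℕ} {g ρ : EuclideanSpace ℝ (Fin n) → ℝ} {Cρ Lρ : ℝ}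
    (hgi : Integrable g) (hρc : Continuous ρ) (hρb : ∀ s, |ρ s| ≤ Cρ)
    (hlip : ∀ a b, |ρ a - ρ b| ≤ Lρ * ‖a - b‖) (hLρ : 0 ≤ Lρ)
    (x y : EuclideanSpace ℝ (Fin n)) :
    |AUXconv g ρ x - AUXconv g ρ y| ≤ (Lρ * ∫ t, |g t|) * ‖x - y‖ := by
  have heq : AUXconv g ρ x - AUXconv g ρ y = ∫ t, g t * (ρ (x - t) - ρ (y - t)) := by
    rw [AUXconv, AUXconv, ← integral_sub (AUXint hgi hρc hρb x) (AUXint hgi hρc hρb y)]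
    congr 1
    ext t
    ring
  rw [← Real.norm_eq_abs, heq]
  calc ‖∫ t, g t * (ρ (x - t) - ρ (y - t))‖ ≤ ∫ t, |g t| * (Lρ * ‖x - y‖) := by
        refine norm_integral_le_of_norm_le (hgi.abs.mul_const _) ?_
        filter_upwards with t
        rw [Real.norm_eq_abs, abs_mul]
        refine mul_le_mul le_rfl ?_ (abs_nonneg _) (abs_nonneg _)
        have := hlip (x - t) (y - t)
        simpa [sub_sub_sub_cancel_right] using this
    _ = (Lρ * ∫ t, |g t|) * ‖x - y‖ := by rw [integral_mul_const]; ring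

theorem AUXapprox {n : ℕ} {p q : ℝ} (hpq : p.HolderConjugate q)
    {g ρ : EuclideanSpace ℝ (Fin n) → ℝ} {ε : ℝ} (hε : 0 ≤ ε)
    (hg : ContDiff ℝ 1 g) (hgs : HasCompactSupport g)
    (hρc : Continuous ρ) (hρcs : HasCompactSupport ρ) (hρ0 : ∀ s, 0 ≤ ρ s)
    (hρ1 : ∫ s, ρ s = 1) (hρs : ∀ s, ρ s ≠ 0 → ‖s‖ ≤ ε) :
    ∫⁻ x, (‖AUXconv g ρ x - g x‖₊ : ℝ≥0∞) ^ p ≤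
      (ENNReal.ofReal ε) ^ p * ∫⁻ x, (‖fderiv ℝ g x‖₊ : ℝ≥0∞) ^ p := by
  have hp0 : (0:ℝ) < p := hpq.pos
  have hgc : Continuous g := hg.continuous
  have hgi : Integrable g := hgc.integrable_of_hasCompactSupport hgs
  have hρi : Integrable ρ := hρc.integrable_of_hasCompactSupport hρcs
  set ρ' : EuclideanSpace ℝ (Fin n) → ℝ≥0∞ := fun s => ENNReal.ofReal (ρ s) with hρ'
  have hρ'm : Measurable ρ' := ENNReal.measurable_ofReal.comp hρc.measurable
  have hρ'1 : ∫⁻ s, ρ' s = 1 := by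
    rw [← ofReal_integral_eq_lintegral_ofReal hρi (Filter.Eventually.of_forall hρ0), hρ1,
      ENNReal.ofReal_one]
  -- pointwise identity
  have heq : ∀ x, AUXconv g ρ x - g x = ∫ s, ρ s * (g (x - s) - g x) := by
    intro x
    have h1 : Integrable fun s => ρ s * g (x - s) := by
      refine Continuous.integrable_of_hasCompactSupport
        (hρc.mul (hgc.comp (continuous_const.sub continuous_id))) ?_
      exact hρcs.mul_right
    have h2 : (∫ s, ρ s * g x) = g x := by
      rw [integral_mul_const, hρ1, one_mul]
    have h3 : ∫ s, ρ s * (g (x - s) - g x) = (∫ s, ρ s * g (x - s)) - ∫ s, ρ s * g x := by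
      rw [← integral_sub h1 (hρi.mul_const _)]
      congr 1
      ext s
      ring
    rw [AUXconv_eq, h3, h2]
  -- pointwise bound after Jensen
  have hpt : ∀ x, (‖AUXconv g ρ x - g x‖₊ : ℝ≥0∞) ^ p ≤
      ∫⁻ s, ρ' s * (‖g (x - s) - g x‖₊ : ℝ≥0∞) ^ p := by
    intro x
    have h1 : (‖AUXconv g ρ x - g x‖₊ : ℝ≥0∞) ≤ ∫⁻ s, ρ' s * (‖g (x - s) - g x‖₊ : ℝ≥0∞) := by
      rw [heq x]
      refine le_trans (enorm_integral_le_lintegral_enorm _) ?_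
      refine le_of_eq (lintegral_congr fun s => ?_)
      rw [enorm_eq_nnnorm, nnnorm_mul, ENNReal.coe_mul, ← enorm_eq_nnnorm (ρ s),
        Real.enorm_eq_ofReal (hρ0 s)]
    refine le_trans (ENNReal.rpow_le_rpow h1 hp0.le) ?_
    refine AUXJ volume hpq hρ'm.aemeasurable ?_ hρ'1
    exact (ENNReal.continuous_coe_iff.2 ((hgc.comp (continuous_const.sub continuous_id)).sub
      (continuous_const : Continuous fun _ => g x)).nnnorm).measurable.aemeasurable
  calc ∫⁻ x, (‖AUXconv g ρ x - g x‖₊ : ℝ≥0∞) ^ p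
      ≤ ∫⁻ x, ∫⁻ s, ρ' s * (‖g (x - s) - g x‖₊ : ℝ≥0∞) ^ p := lintegral_mono hpt
    _ = ∫⁻ s, ∫⁻ x, ρ' s * (‖g (x - s) - g x‖₊ : ℝ≥0∞) ^ p := by
        refine lintegral_lintegral_swap (Measurable.aemeasurable ?_)
        refine Measurable.mul ?_ ?_
        · exact (ENNReal.continuous_ofReal.comp (hρc.comp continuous_snd)).measurable
        · refine (ENNReal.continuous_rpow_const.comp (ENNReal.continuous_coe_iff.2
            ((hgc.comp (continuous_fst.sub continuous_snd)).sub
              (hgc.comp continuous_fst)).nnnorm)).measurable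
    _ ≤ ∫⁻ s, ρ' s * ((ENNReal.ofReal ε) ^ p * ∫⁻ x, (‖fderiv ℝ g x‖₊ : ℝ≥0∞) ^ p) := by
        refine lintegral_mono fun s => ?_
        rw [lintegral_const_mul _ ?_]
        swap
        · exact (ENNReal.continuous_rpow_const.comp (ENNReal.continuous_coe_iff.2
            ((hgc.comp (continuous_id.sub continuous_const)).sub hgc).nnnorm)).measurable
        by_cases hs : ρ s = 0
        · simp [ρ', hs]
        · refine mul_le_mul_right ?_ _
          have htr := AUXT hpq g hg (-s)
          have h2 : ∫⁻ x, (‖g (x - s) - g x‖₊ : ℝ≥0∞) ^ p ≤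
              (ENNReal.ofReal ‖s‖) ^ p * ∫⁻ x, (‖fderiv ℝ g x‖₊ : ℝ≥0∞) ^ p := by
            simpa [sub_eq_add_neg] using htr
          refine h2.trans ?_
          refine mul_le_mul_left ?_ _
          exact ENNReal.rpow_le_rpow (ENNReal.ofReal_le_ofReal (hρs s hs)) hp0.le
    _ = (ENNReal.ofReal ε) ^ p * ∫⁻ x, (‖fderiv ℝ g x‖₊ : ℝ≥0∞) ^ p := by
        rw [lintegral_mul_const _ hρ'm, hρ'1, one_mul]


theorem AUXnet {n : ℕ} (K : Set (EuclideanSpace ℝ (Fin n))) (hK : IsCompact K)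
    (h : ℕ → EuclideanSpace ℝ (Fin n) → ℝ) {L C : ℝ}
    (hL : 0 ≤ L) (hlip : ∀ ν x y, |h ν x - h ν y| ≤ L * ‖x - y‖)
    (hbd : ∀ ν x, |h ν x| ≤ C) {δ : ℝ} (hδ : 0 < δ) :
    ∃ F : Finset ℕ, ∀ ν : ℕ, ∃ j ∈ F, ∀ x ∈ K, |h ν x - h j x| ≤ δ := by
  classical
  set r : ℝ := δ / (4 * (L + 1)) with hr_def
  have hr : 0 < r := by positivity
  have hLr : L * r ≤ δ / 4 := by
    have h1 : L / (L + 1) ≤ 1 := by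
      rw [div_le_one (by linarith)]
      linarith
    have h2 : L * r = L / (L + 1) * (δ / 4) := by
      rw [hr_def]
      field_simp
    rw [h2]
    calc L / (L + 1) * (δ / 4) ≤ 1 * (δ / 4) := mul_le_mul_of_nonneg_right h1 (by positivity)
      _ = δ / 4 := one_mul _
  obtain ⟨t, htfin, htcover⟩ := (Metric.totallyBounded_iff.1 hK.totallyBounded) r hr
  set δ' : ℝ := δ / 4 with hδ'_def
  have hδ' : 0 < δ' := by positivity
  haveI : Finite ↥t := htfin.to_subtype
  set Φ : ℕ → (↥t → ℤ) := fun ν y => ⌊h ν ↑y / δ'⌋ with hΦ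
  have hrange : (Set.range Φ).Finite := by
    have hsub : Set.range Φ ⊆ Set.pi Set.univ (fun _ : ↥t => Set.Icc ⌊(-C)/δ'⌋ ⌊C/δ'⌋) := by
      rintro _ ⟨ν, rfl⟩ y _
      have h1 := (abs_le.1 (hbd ν y)).1
      have h2 := (abs_le.1 (hbd ν y)).2
      constructor
      · exact Int.floor_le_floor ((div_le_div_iff_of_pos_right hδ').2 h1)
      · exact Int.floor_le_floor ((div_le_div_iff_of_pos_right hδ').2 h2)
    exact (Set.Finite.pi fun _ => Set.finite_Icc _ _).subset hsub
  set rep : (↥t → ℤ) → ℕ := fun z => if hz : ∃ ν, Φ ν = z then hz.choose else 0 with hrep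
  refine ⟨hrange.toFinset.image rep, fun ν => ?_⟩
  have hz : ∃ ν', Φ ν' = Φ ν := ⟨ν, rfl⟩
  set j : ℕ := rep (Φ ν) with hj_def
  have hΦj : Φ j = Φ ν := by
    rw [hj_def, hrep]
    simp only [dif_pos hz]
    exact hz.choose_spec
  refine ⟨j, ?_, ?_⟩
  · exact Finset.mem_image.2 ⟨Φ ν, hrange.mem_toFinset.2 ⟨ν, rfl⟩, rfl⟩
  · intro x hx
    obtain ⟨y, hyt, hxy⟩ := by
      have := htcover hx
      simpa using this
    have hyK : (⟨y, hyt⟩ : ↥t) = ⟨y, hyt⟩ := rfl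
    -- middle bound from equal floors
    have hmid : |h ν y - h j y| ≤ δ' := by
      have hfl : ⌊h ν y / δ'⌋ = ⌊h j y / δ'⌋ := by
        have := congrFun hΦj ⟨y, hyt⟩
        simp only [hΦ] at this
        exact this.symm
      set a := h ν y
      set b := h j y
      have ha1 := Int.floor_le (a / δ')
      have ha2 := Int.lt_floor_add_one (a / δ')
      have hb1 := Int.floor_le (b / δ')
      have hb2 := Int.lt_floor_add_one (b / δ')
      rw [hfl] at ha1 ha2
      have hd : |a / δ' - b / δ'| ≤ 1 := by
        rw [abs_sub_le_iff]
        constructor <;> linarith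
      have habs : a - b = (a / δ' - b / δ') * δ' := by field_simp
      rw [habs, abs_mul, abs_of_pos hδ']
      calc |a / δ' - b / δ'| * δ' ≤ 1 * δ' := mul_le_mul_of_nonneg_right hd hδ'.le
        _ = δ' := one_mul _
    have hx1 : |h ν x - h ν y| ≤ δ / 4 := by
      refine (hlip ν x y).trans ?_
      have : ‖x - y‖ ≤ r := by
        rw [← dist_eq_norm]
        exact hxy.le
      calc L * ‖x - y‖ ≤ L * r := mul_le_mul_of_nonneg_left this hL
        _ ≤ δ / 4 := hLr
    have hx2 : |h j y - h j x| ≤ δ / 4 := by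
      refine (hlip j y x).trans ?_
      have : ‖y - x‖ ≤ r := by
        rw [← dist_eq_norm, dist_comm]
        exact hxy.le
      calc L * ‖y - x‖ ≤ L * r := mul_le_mul_of_nonneg_left this hL
        _ ≤ δ / 4 := hLr
    calc |h ν x - h j x| = |(h ν x - h ν y) + (h ν y - h j y) + (h j y - h j x)| := by
          ring_nf
      _ ≤ |h ν x - h ν y| + |h ν y - h j y| + |h j y - h j x| := abs_add_three _ _ _
      _ ≤ δ / 4 + δ / 4 + δ / 4 := by
          exact add_le_add (add_le_add hx1 hmid) hx2
      _ ≤ δ := by linarith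

theorem AUXmono {α : Type*} [MeasurableSpace α] {μ : Measure α} {G₁ G₂ : Type*}
    [NormedAddCommGroup G₁] [NormedAddCommGroup G₂] {F1 : α → G₁} {F2 : α → G₂} {cst : ℝ}
    (hc : 0 ≤ cst) (h : ∀ x, ‖F1 x‖ ≤ cst * ‖F2 x‖) (q : ℝ≥0∞) :
    eLpNorm F1 q μ ≤ ENNReal.ofReal cst * eLpNorm F2 q μ := by
  calc eLpNorm F1 q μ ≤ eLpNorm (fun x => cst * ‖F2 x‖) q μ := by
        refine eLpNorm_mono_ae (Filter.Eventually.of_forall fun x => ?_)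
        rw [Real.norm_eq_abs, abs_of_nonneg (by positivity)]
        exact h x
    _ = (‖cst‖₊ : ℝ≥0∞) * eLpNorm (fun x => ‖F2 x‖) q μ := by
        rw [← enorm_eq_nnnorm, ← eLpNorm_const_smul cst (fun x => ‖F2 x‖) q μ]
        rfl
    _ = ENNReal.ofReal cst * eLpNorm F2 q μ := by
        rw [eLpNorm_norm, ← enorm_eq_nnnorm, Real.enorm_eq_ofReal hc]

theorem AUXelp {α : Type*} [MeasurableSpace α] {μ : Measure α} {G₁ G₂ : Type*}
    [NormedAddCommGroup G₁] [NormedAddCommGroup G₂] {p : ℝ} (hp0 : 0 < p)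
    {F1 : α → G₁} {F2 : α → G₂} {e : ℝ}
    (hle : ∫⁻ x, (‖F1 x‖₊ : ℝ≥0∞) ^ p ∂μ ≤
      (ENNReal.ofReal e) ^ p * ∫⁻ x, (‖F2 x‖₊ : ℝ≥0∞) ^ p ∂μ) :
    eLpNorm F1 (ENNReal.ofReal p) μ ≤ ENNReal.ofReal e * eLpNorm F2 (ENNReal.ofReal p) μ := by
  have hq0 : ENNReal.ofReal p ≠ 0 := by
    simp [ENNReal.ofReal_pos, hp0, ne_of_gt]
  rw [eLpNorm_eq_lintegral_rpow_enorm_toReal hq0 ENNReal.ofReal_ne_top,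
    eLpNorm_eq_lintegral_rpow_enorm_toReal hq0 ENNReal.ofReal_ne_top,
    ENNReal.toReal_ofReal hp0.le]
  calc (∫⁻ x, (‖F1 x‖₊ : ℝ≥0∞) ^ p ∂μ) ^ (1/p)
      ≤ ((ENNReal.ofReal e) ^ p * ∫⁻ x, (‖F2 x‖₊ : ℝ≥0∞) ^ p ∂μ) ^ (1/p) :=
        ENNReal.rpow_le_rpow hle (by positivity)
    _ = ENNReal.ofReal e * (∫⁻ x, (‖F2 x‖₊ : ℝ≥0∞) ^ p ∂μ) ^ (1/p) := by
        rw [ENNReal.mul_rpow_of_nonneg _ _ (by positivity : (0:ℝ) ≤ 1/p), ← ENNReal.rpow_mul,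
          mul_one_div_cancel hp0.ne', ENNReal.rpow_one]

/-- **Compactness of multiplication by a decaying function.** Let `n ∈ ℕ`, `1 < p < ∞`,
`λ ∈ ℝ`, and let `f : ℝⁿ → ℝ` be bounded and measurable with `esssup_{|x| ≥ i} |f| → 0` as
`i → ∞`. Then for every sequence of continuously differentiable `u_ν : ℝⁿ → ℝ` with
`sup_ν (‖⟨·⟩^λ u_ν‖_{L^p} + ‖⟨·⟩^λ ‖Du_ν‖‖_{L^p}) < ∞` there exist a subsequence `(ν_j)` and a
measurable `v` with `‖⟨·⟩^λ v‖_{L^p} < ∞` such that `‖⟨·⟩^λ (f u_{ν_j} - v)‖_{L^p} → 0`. -/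
theorem multiplication_compact (n : ℕ) (hn : 0 < n) (p lam : ℝ) (hp : 1 < p)
    (f : EuclideanSpace ℝ (Fin n) → ℝ) (hfmeas : Measurable f)
    (hfbdd : ∃ M : ℝ, ∀ x, |f x| ≤ M)
    (hdecay : Filter.Tendsto
      (fun i : ℕ => eLpNorm f ⊤
        (volume.restrict {x : EuclideanSpace ℝ (Fin n) | (i : ℝ) ≤ ‖x‖}))
      Filter.atTop (nhds 0))
    (us : ℕ → EuclideanSpace ℝ (Fin n) → ℝ) (hC1 : ∀ ν, ContDiff ℝ 1 (us ν))
    (hbdd : (⨆ ν : ℕ,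
        (eLpNorm (fun x => jbracket x ^ lam * us ν x) (ENNReal.ofReal p) volume
          + eLpNorm (fun x => jbracket x ^ lam * ‖fderiv ℝ (us ν) x‖)
              (ENNReal.ofReal p) volume)) < ⊤) :
    ∃ φ : ℕ → ℕ, StrictMono φ ∧ ∃ v : EuclideanSpace ℝ (Fin n) → ℝ, Measurable v ∧
      eLpNorm (fun x => jbracket x ^ lam * v x) (ENNReal.ofReal p) volume < ⊤ ∧
      Filter.Tendsto
        (fun j => eLpNorm (fun x => jbracket x ^ lam * (f x * us (φ j) x - v x))
          (ENNReal.ofReal p) volume)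
        Filter.atTop (nhds 0) := by
  classical
  obtain ⟨M, hM⟩ := hfbdd
  have hM0 : 0 ≤ M := le_trans (abs_nonneg _) (hM 0)
  have hp0 : (0:ℝ) < p := lt_trans one_pos hp
  set q : ℝ≥0∞ := ENNReal.ofReal p with hq_def
  have hq0 : q ≠ 0 := by
    simp only [hq_def, ne_eq, ENNReal.ofReal_eq_zero, not_le]
    exact hp0
  have hqtop : q ≠ ⊤ := ENNReal.ofReal_ne_top
  have hqt : q.toReal = p := ENNReal.toReal_ofReal hp0.le
  have hq1 : 1 ≤ q := by
    rw [hq_def, ← ENNReal.ofReal_one]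
    exact ENNReal.ofReal_le_ofReal hp.le
  haveI : Fact (1 ≤ q) := ⟨hq1⟩
  have hpq : p.HolderConjugate (Real.conjExponent p) := Real.HolderConjugate.conjExponent hp
  set w : EuclideanSpace ℝ (Fin n) → ℝ := fun x => jbracket x ^ lam with hw_def
  have hjb : ∀ x : EuclideanSpace ℝ (Fin n), 0 < jbracket x := by
    intro x
    rw [jbracket]
    have : (0:ℝ) < 1 + ‖x‖ ^ 2 := by positivity
    exact Real.sqrt_pos.2 this
  have hw_pos : ∀ x, 0 < w x := fun x => Real.rpow_pos_of_pos (hjb x) lam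
  have hw_cont : Continuous w := by
    have h1 : Continuous fun x : EuclideanSpace ℝ (Fin n) => jbracket x := by
      simp only [jbracket]
      exact Real.continuous_sqrt.comp (by continuity)
    exact h1.rpow_const (fun x => Or.inl (hjb x).ne')
  set A : ℝ≥0∞ := (⨆ ν : ℕ,
      (eLpNorm (fun x => w x * us ν x) q volume
        + eLpNorm (fun x => w x * ‖fderiv ℝ (us ν) x‖) q volume)) with hA_def
  have hAfin : A ≠ ⊤ := hbdd.ne
  have hAν : ∀ ν, eLpNorm (fun x => w x * us ν x) q volume
      + eLpNorm (fun x => w x * ‖fderiv ℝ (us ν) x‖) q volume ≤ A := by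
    intro ν
    rw [hA_def]
    exact le_iSup (fun ν => eLpNorm (fun x => w x * us ν x) q volume
      + eLpNorm (fun x => w x * ‖fderiv ℝ (us ν) x‖) q volume) ν
  have hAu : ∀ ν, eLpNorm (fun x => w x * us ν x) q volume ≤ A :=
    fun ν => le_trans le_self_add (hAν ν)
  have hAd : ∀ ν, eLpNorm (fun x => w x * ‖fderiv ℝ (us ν) x‖) q volume ≤ A :=
    fun ν => le_trans le_add_self (hAν ν)
  set W : ℕ → EuclideanSpace ℝ (Fin n) → ℝ := fun ν x => w x * (f x * us ν x) with hW_def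
  have hu_cont : ∀ ν, Continuous (us ν) := fun ν => (hC1 ν).continuous
  have hWsm : ∀ ν, AEStronglyMeasurable (W ν) volume := fun ν =>
    ((hw_cont.measurable.mul (hfmeas.mul (hu_cont ν).measurable)).stronglyMeasurable).aestronglyMeasurable
  have hWptw : ∀ ν x, ‖W ν x‖ ≤ M * ‖w x * us ν x‖ := by
    intro ν x
    simp only [hW_def, Real.norm_eq_abs]
    calc |w x * (f x * us ν x)| = |f x| * |w x * us ν x| := by
          rw [abs_mul, abs_mul, abs_mul]
          ring
      _ ≤ M * |w x * us ν x| := mul_le_mul_of_nonneg_right (hM x) (abs_nonneg _)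
  have hWle : ∀ ν (μ' : Measure (EuclideanSpace ℝ (Fin n))),
      eLpNorm (W ν) q μ' ≤ ENNReal.ofReal M * eLpNorm (fun x => w x * us ν x) q μ' :=
    fun ν μ' => AUXmono hM0 (hWptw ν) q
  have hWA : ∀ ν, eLpNorm (W ν) q volume ≤ ENNReal.ofReal M * A :=
    fun ν => le_trans (hWle ν volume) (mul_le_mul_right (hAu ν) _)
  have hmem : ∀ ν, MemLp (W ν) q volume := by
    intro ν
    refine ⟨hWsm ν, lt_of_le_of_lt (hWA ν) ?_⟩
    exact ENNReal.mul_lt_top ENNReal.ofReal_lt_top hbdd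
  set T : ℕ → Lp ℝ q volume := fun ν => (hmem ν).toLp (W ν) with hT_def
  -- MAIN STEP: total boundedness
  have hTB : TotallyBounded (Set.range T) := by
    rw [EMetric.totallyBounded_iff]
    intro ε hε
    obtain ⟨c, hc0, hcε⟩ : ∃ c : ℝ, 0 < c ∧ ENNReal.ofReal (4 * c) < ε := by
      rcases eq_or_ne ε ⊤ with rfl | hεtop
      · exact ⟨1, one_pos, by simp [lt_top_iff_ne_top]⟩
      · have hε' : 0 < ε.toReal := ENNReal.toReal_pos hε.ne' hεtop
        refine ⟨ε.toReal / 8, by positivity, ?_⟩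
        have h48 : 4 * (ε.toReal / 8) < ε.toReal := by linarith
        calc ENNReal.ofReal (4 * (ε.toReal / 8)) < ENNReal.ofReal ε.toReal :=
              (ENNReal.ofReal_lt_ofReal_iff hε').2 h48
          _ = ε := ENNReal.ofReal_toReal hεtop
    -- tail cutoff radius
    set θ : ℝ≥0∞ := ENNReal.ofReal c / (A + 1) with hθ_def
    have hθ0 : 0 < θ := by
      refine ENNReal.div_pos ?_ ?_
      · simp only [ne_eq, ENNReal.ofReal_eq_zero, not_le]
        exact hc0
      · exact ENNReal.add_ne_top.2 ⟨hAfin, ENNReal.one_ne_top⟩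
    obtain ⟨i₀, hi₀⟩ : ∃ i₀ : ℕ,
        eLpNorm f ⊤ (volume.restrict {x : EuclideanSpace ℝ (Fin n) | (i₀:ℝ) ≤ ‖x‖}) ≤ θ := by
      obtain ⟨N, hN⟩ := (ENNReal.tendsto_atTop_zero.1 hdecay) θ hθ0
      exact ⟨N, hN N le_rfl⟩
    set R : ℝ := (i₀ : ℝ) with hR_def
    have hR0 : (0:ℝ) ≤ R := Nat.cast_nonneg i₀
    set S : Set (EuclideanSpace ℝ (Fin n)) := {x | R ≤ ‖x‖} with hS_def
    have hSmeas : MeasurableSet S := (isClosed_le continuous_const continuous_norm).measurableSet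
    have hScompl : ∀ x : EuclideanSpace ℝ (Fin n), x ∈ Sᶜ ↔ ‖x‖ < R := by
      intro x
      simp only [hS_def, Set.mem_compl_iff, Set.mem_setOf_eq, not_le]
    -- tail bound
    have htail : ∀ ν, eLpNorm (S.indicator (W ν)) q volume ≤ ENNReal.ofReal c := by
      intro ν
      rw [eLpNorm_indicator_eq_eLpNorm_restrict hSmeas]
      have h1 : eLpNorm (W ν) q (volume.restrict S) ≤
          eLpNorm f ⊤ (volume.restrict S) *
            eLpNorm (fun x => w x * us ν x) q (volume.restrict S) := by
        have heqW : W ν = fun x => f x * (w x * us ν x) := by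
          funext x
          simp only [hW_def]
          ring
        rw [heqW]
        refine (eLpNorm_le_eLpNorm_top_mul_eLpNorm q f
          (hw_cont.mul (hu_cont ν)).aestronglyMeasurable (fun a b => a * b) 1 ?_).trans
            (by rw [ENNReal.coe_one, one_mul]; exact le_rfl)
        filter_upwards with x
        rw [nnnorm_mul, one_mul]
      refine h1.trans ?_
      have h2 : eLpNorm (fun x => w x * us ν x) q (volume.restrict S) ≤ A :=
        le_trans (eLpNorm_mono_measure _ Measure.restrict_le_self) (hAu ν)
      calc eLpNorm f ⊤ (volume.restrict S) * eLpNorm (fun x => w x * us ν x) q (volume.restrict S)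
          ≤ θ * A := mul_le_mul' hi₀ h2
        _ ≤ θ * (A + 1) := mul_le_mul_right le_self_add _
        _ = ENNReal.ofReal c := by
            rw [hθ_def]
            exact ENNReal.div_mul_cancel (by simp) (ENNReal.add_ne_top.2 ⟨hAfin, ENNReal.one_ne_top⟩)
    -- smooth cutoff
    set bump : ContDiffBump (0 : EuclideanSpace ℝ (Fin n)) :=
      ⟨R+1, R+2, by linarith, by linarith⟩ with hbump_def
    set χ : EuclideanSpace ℝ (Fin n) → ℝ := fun x => bump x with hχ_def
    have hχ_smooth : ContDiff ℝ 1 χ := bump.contDiff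
    have hχcs : HasCompactSupport χ := bump.hasCompactSupport
    have hχ1 : ∀ x : EuclideanSpace ℝ (Fin n), ‖x‖ < R + 1 → χ x = 1 := by
      intro x hx
      exact bump.one_of_mem_closedBall (by
        rw [Metric.mem_closedBall, dist_zero_right]
        exact hx.le)
    have hχle : ∀ x, |χ x| ≤ 1 := by
      intro x
      rw [abs_of_nonneg bump.nonneg]
      exact bump.le_one
    have hχ0 : ∀ x : EuclideanSpace ℝ (Fin n), R + 2 < ‖x‖ → χ x = 0 ∧ fderiv ℝ χ x = 0 := by
      intro x hx
      have hxn : x ∉ tsupport χ := by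
        rw [hχ_def]
        rw [bump.tsupport_eq]
        rw [Metric.mem_closedBall, dist_zero_right]
        push_neg
        exact hx
      exact ⟨image_eq_zero_of_notMem_tsupport hxn, fderiv_of_notMem_tsupport (𝕜 := ℝ) hxn⟩
    obtain ⟨Kχ, hKχ⟩ := (hχcs.fderiv (𝕜 := ℝ)).exists_bound_of_continuous
      (hχ_smooth.continuous_fderiv one_ne_zero)
    have hKχ0 : 0 ≤ Kχ := le_trans (norm_nonneg _) (hKχ 0)
    -- bounds for the weight on balls
    obtain ⟨x₁, hx₁K, hx₁min'⟩ := (isCompact_closedBall (0:EuclideanSpace ℝ (Fin n)) (R+2)).exists_isMinOn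
      ⟨0, Metric.mem_closedBall_self (by linarith)⟩ hw_cont.continuousOn
    have hx₁min := isMinOn_iff.1 hx₁min'
    set c₁ : ℝ := w x₁ with hc₁_def
    have hc₁ : 0 < c₁ := hw_pos x₁
    have hc₁w : ∀ x : EuclideanSpace ℝ (Fin n), ‖x‖ ≤ R + 2 → c₁ ≤ w x := by
      intro x hx
      exact hx₁min x (by rw [Metric.mem_closedBall, dist_zero_right]; exact hx)
    obtain ⟨x₂, hx₂K, hx₂max'⟩ := (isCompact_closedBall (0:EuclideanSpace ℝ (Fin n)) R).exists_isMaxOn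
      ⟨0, Metric.mem_closedBall_self hR0⟩ hw_cont.continuousOn
    have hx₂max := isMaxOn_iff.1 hx₂max'
    set C₁ : ℝ := w x₂ with hC₁_def
    have hC₁0 : 0 < C₁ := hw_pos x₂
    have hC₁w : ∀ x : EuclideanSpace ℝ (Fin n), ‖x‖ ≤ R → w x ≤ C₁ := by
      intro x hx
      exact hx₂max x (by rw [Metric.mem_closedBall, dist_zero_right]; exact hx)
    -- localized functions
    set g : ℕ → EuclideanSpace ℝ (Fin n) → ℝ := fun ν x => χ x * us ν x with hg_def
    have hgC1 : ∀ ν, ContDiff ℝ 1 (g ν) := fun ν => hχ_smooth.mul (hC1 ν)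
    have hgcs : ∀ ν, HasCompactSupport (g ν) := fun ν => hχcs.mul_right
    have hgzero : ∀ ν (x : EuclideanSpace ℝ (Fin n)), R + 2 < ‖x‖ → g ν x = 0 := by
      intro ν x hx
      simp only [hg_def, (hχ0 x hx).1, zero_mul]
    have hgu : ∀ ν (x : EuclideanSpace ℝ (Fin n)), ‖x‖ < R + 1 → g ν x = us ν x := by
      intro ν x hx
      simp only [hg_def, hχ1 x hx, one_mul]
    have hgint : ∀ ν, Integrable (g ν) :=
      fun ν => (hgC1 ν).continuous.integrable_of_hasCompactSupport (hgcs ν)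
    -- Lp bound for g
    have hgptw : ∀ ν x, ‖g ν x‖ ≤ c₁⁻¹ * ‖w x * us ν x‖ := by
      intro ν x
      rcases le_or_gt ‖x‖ (R+2) with hx | hx
      · simp only [hg_def, Real.norm_eq_abs]
        calc |χ x * us ν x| ≤ |us ν x| := by
              rw [abs_mul]
              exact mul_le_of_le_one_left (abs_nonneg _) (hχle x)
          _ = c₁⁻¹ * (c₁ * |us ν x|) := by
              rw [← mul_assoc, inv_mul_cancel₀ hc₁.ne', one_mul]
          _ ≤ c₁⁻¹ * |w x * us ν x| := by
              refine mul_le_mul_of_nonneg_left ?_ (by positivity)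
              rw [abs_mul, abs_of_pos (hw_pos x)]
              exact mul_le_mul_of_nonneg_right (hc₁w x hx) (abs_nonneg _)
      · rw [hgzero ν x hx]
        simp only [norm_zero]
        positivity
    have hgA : ∀ ν, eLpNorm (g ν) q volume ≤ ENNReal.ofReal c₁⁻¹ * A :=
      fun ν => le_trans (AUXmono (by positivity) (hgptw ν) q) (mul_le_mul_right (hAu ν) _)
    -- Lp bound for the derivative of g
    have hDg_eq : ∀ ν x, fderiv ℝ (g ν) x = χ x • fderiv ℝ (us ν) x + us ν x • fderiv ℝ χ x := by
      intro ν x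
      exact fderiv_mul (hχ_smooth.differentiable one_ne_zero x) ((hC1 ν).differentiable one_ne_zero x)
    have hDgA : ∀ ν, eLpNorm (fun x => fderiv ℝ (g ν) x) q volume ≤
        ENNReal.ofReal (c₁⁻¹ + Kχ * c₁⁻¹) * A := by
      intro ν
      have hsplit : (fun x => fderiv ℝ (g ν) x) = (fun x => χ x • fderiv ℝ (us ν) x)
          + (fun x => us ν x • fderiv ℝ χ x) := by
        funext x
        simp only [Pi.add_apply]
        exact hDg_eq ν x
      rw [hsplit]
      have hm1 : AEStronglyMeasurable (fun x => χ x • fderiv ℝ (us ν) x) volume :=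
        ((hχ_smooth.continuous.smul ((hC1 ν).continuous_fderiv one_ne_zero))).aestronglyMeasurable
      have hm2 : AEStronglyMeasurable (fun x => us ν x • fderiv ℝ χ x) volume :=
        (((hu_cont ν).smul (hχ_smooth.continuous_fderiv one_ne_zero))).aestronglyMeasurable
      have hadd := eLpNorm_add_le hm1 hm2 hq1
      refine le_trans hadd ?_
      have hb1 : eLpNorm (fun x => χ x • fderiv ℝ (us ν) x) q volume ≤
          ENNReal.ofReal c₁⁻¹ * A := by
        refine le_trans (AUXmono (by positivity)
          (F2 := fun x => w x * ‖fderiv ℝ (us ν) x‖) ?_ q) (mul_le_mul_right (hAd ν) _)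
        intro x
        rcases le_or_gt ‖x‖ (R+2) with hx | hx
        · rw [norm_smul, Real.norm_eq_abs (χ x), Real.norm_eq_abs]
          calc |χ x| * ‖fderiv ℝ (us ν) x‖ ≤ ‖fderiv ℝ (us ν) x‖ :=
                mul_le_of_le_one_left (norm_nonneg _) (hχle x)
            _ = c₁⁻¹ * (c₁ * ‖fderiv ℝ (us ν) x‖) := by
                rw [← mul_assoc, inv_mul_cancel₀ hc₁.ne', one_mul]
            _ ≤ c₁⁻¹ * |w x * ‖fderiv ℝ (us ν) x‖| := by
                refine mul_le_mul_of_nonneg_left ?_ (by positivity)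
                rw [abs_mul, abs_of_pos (hw_pos x), abs_of_nonneg (norm_nonneg _)]
                exact mul_le_mul_of_nonneg_right (hc₁w x hx) (norm_nonneg _)
        · rw [(hχ0 x hx).1]
          simp only [zero_smul, norm_zero]
          positivity
      have hb2 : eLpNorm (fun x => us ν x • fderiv ℝ χ x) q volume ≤
          ENNReal.ofReal (Kχ * c₁⁻¹) * A := by
        refine le_trans (AUXmono (by positivity)
          (F2 := fun x => w x * us ν x) ?_ q) (mul_le_mul_right (hAu ν) _)
        intro x
        rcases le_or_gt ‖x‖ (R+2) with hx | hx
        · rw [norm_smul, Real.norm_eq_abs (us ν x), Real.norm_eq_abs]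
          calc |us ν x| * ‖fderiv ℝ χ x‖ ≤ |us ν x| * Kχ :=
                mul_le_mul_of_nonneg_left (hKχ x) (abs_nonneg _)
            _ = Kχ * |us ν x| := by ring
            _ = Kχ * c₁⁻¹ * (c₁ * |us ν x|) := by
                rw [mul_assoc, ← mul_assoc c₁⁻¹, inv_mul_cancel₀ hc₁.ne', one_mul]
            _ ≤ Kχ * c₁⁻¹ * |w x * us ν x| := by
                refine mul_le_mul_of_nonneg_left ?_ (by positivity)
                rw [abs_mul, abs_of_pos (hw_pos x)]
                exact mul_le_mul_of_nonneg_right (hc₁w x hx) (abs_nonneg _)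
        · rw [(hχ0 x hx).2]
          simp only [smul_zero, norm_zero]
          positivity
      calc eLpNorm (fun x => χ x • fderiv ℝ (us ν) x) q volume
            + eLpNorm (fun x => us ν x • fderiv ℝ χ x) q volume
          ≤ ENNReal.ofReal c₁⁻¹ * A + ENNReal.ofReal (Kχ * c₁⁻¹) * A := add_le_add hb1 hb2
        _ = ENNReal.ofReal (c₁⁻¹ + Kχ * c₁⁻¹) * A := by
            rw [← add_mul, ← ENNReal.ofReal_add (by positivity) (by positivity)]
    -- uniform L¹ bound for g ν
    have hL1 : ∀ ν, ∫⁻ t, (‖g ν t‖₊ : ℝ≥0∞) ≤ (ENNReal.ofReal c₁⁻¹ * A) *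
        (volume (Metric.closedBall (0:EuclideanSpace ℝ (Fin n)) (R+2)))
          ^ (1 / Real.conjExponent p) := by
      intro ν
      set B2 := Metric.closedBall (0:EuclideanSpace ℝ (Fin n)) (R+2) with hB2
      have hind : ∀ t, (‖g ν t‖₊ : ℝ≥0∞) =
          ((fun t => (‖g ν t‖₊ : ℝ≥0∞)) * (fun t => B2.indicator (fun _ => (1:ℝ≥0∞)) t)) t := by
        intro t
        simp only [Pi.mul_apply]
        by_cases ht : t ∈ B2
        · rw [Set.indicator_of_mem ht, mul_one]
        · rw [Set.indicator_of_notMem ht, mul_zero]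
          have ht' : R + 2 < ‖t‖ := by
            rw [hB2, Metric.mem_closedBall, dist_zero_right] at ht
            push_neg at ht
            exact ht
          rw [hgzero ν t ht']
          simp
      have hm1 : AEMeasurable (fun t => (‖g ν t‖₊ : ℝ≥0∞)) volume :=
        ((ENNReal.continuous_coe_iff.2 (hgC1 ν).continuous.nnnorm)).measurable.aemeasurable
      have hm2 : AEMeasurable (fun t => B2.indicator (fun _ => (1:ℝ≥0∞)) t) volume :=
        (measurable_const.indicator measurableSet_closedBall).aemeasurable
      calc ∫⁻ t, (‖g ν t‖₊ : ℝ≥0∞)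
          = ∫⁻ t, ((fun t => (‖g ν t‖₊ : ℝ≥0∞)) *
              (fun t => B2.indicator (fun _ => (1:ℝ≥0∞)) t)) t := lintegral_congr hind
        _ ≤ (∫⁻ t, (‖g ν t‖₊ : ℝ≥0∞) ^ p) ^ (1/p) *
            (∫⁻ t, (B2.indicator (fun _ => (1:ℝ≥0∞)) t) ^ (Real.conjExponent p))
              ^ (1 / Real.conjExponent p) :=
            ENNReal.lintegral_mul_le_Lp_mul_Lq volume hpq hm1 hm2
        _ ≤ (ENNReal.ofReal c₁⁻¹ * A) * (volume B2) ^ (1 / Real.conjExponent p) := by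
            refine mul_le_mul ?_ ?_ zero_le zero_le
            · have : (∫⁻ t, (‖g ν t‖₊ : ℝ≥0∞) ^ p) ^ (1/p) = eLpNorm (g ν) q volume := by
                simp only [eLpNorm_eq_lintegral_rpow_enorm_toReal hq0 hqtop, hqt, enorm_eq_nnnorm]
              rw [this]
              exact hgA ν
            · refine le_of_eq ?_
              congr 1
              have hpow : ∀ t, (B2.indicator (fun _ => (1:ℝ≥0∞)) t) ^ (Real.conjExponent p)
                  = B2.indicator (fun _ => (1:ℝ≥0∞)) t := by
                intro t
                by_cases ht : t ∈ B2
                · rw [Set.indicator_of_mem ht, ENNReal.one_rpow]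
                · rw [Set.indicator_of_notMem ht,
                    ENNReal.zero_rpow_of_pos hpq.symm.pos]
              rw [lintegral_congr hpow, lintegral_indicator measurableSet_closedBall]
              simp
              rfl
    set G1e : ℝ≥0∞ := (ENNReal.ofReal c₁⁻¹ * A) *
        (volume (Metric.closedBall (0:EuclideanSpace ℝ (Fin n)) (R+2)))
          ^ (1 / Real.conjExponent p) with hG1e_def
    have hG1efin : G1e ≠ ⊤ := by
      refine ENNReal.mul_ne_top (ENNReal.mul_ne_top ENNReal.ofReal_ne_top hAfin) ?_
      exact ENNReal.rpow_ne_top_of_nonneg (one_div_pos.2 hpq.symm.pos).le measure_closedBall_lt_top.ne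
    set G1 : ℝ := G1e.toReal with hG1_def
    have hG10 : 0 ≤ G1 := ENNReal.toReal_nonneg
    have hgL1 : ∀ ν, ∫ t, |g ν t| ≤ G1 := by
      intro ν
      have h1 : ∫ t, |g ν t| = (∫⁻ t, (‖g ν t‖₊ : ℝ≥0∞)).toReal := by
        simp only [← Real.norm_eq_abs]
        exact integral_norm_eq_lintegral_enorm (hgC1 ν).continuous.aestronglyMeasurable
      rw [h1]
      exact ENNReal.toReal_mono hG1efin (hL1 ν)
    -- constants and mollification radius
    set CD : ℝ := c₁⁻¹ + Kχ * c₁⁻¹ with hCD_def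
    have hCD0 : 0 ≤ CD := by positivity
    set CM : ℝ := C₁ * M with hCM_def
    have hCM0 : 0 ≤ CM := mul_nonneg hC₁0.le hM0
    set At : ℝ := A.toReal with hAt_def
    have hAt0 : 0 ≤ At := ENNReal.toReal_nonneg
    have hAA : A = ENNReal.ofReal At := (ENNReal.ofReal_toReal hAfin).symm
    set c₂ : ℝ := c / ((CM + 1) * (CD + 1) * (At + 1)) with hc₂_def
    have hDen : 0 < (CM + 1) * (CD + 1) * (At + 1) := by
      have h1 : (0:ℝ) < CM + 1 := by linarith
      have h2 : (0:ℝ) < CD + 1 := by linarith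
      have h3 : (0:ℝ) < At + 1 := by linarith
      positivity
    have hc₂ : 0 < c₂ := div_pos hc0 hDen
    -- mollifier
    set base : EuclideanSpace ℝ (Fin n) → ℝ := fun x => max (c₂ - ‖x‖) 0 with hbase_def
    have hbase_cont : Continuous base := (continuous_const.sub continuous_norm).max continuous_const
    have hbase_nn : ∀ x, 0 ≤ base x := fun x => le_max_right _ _
    have hbase_cs : HasCompactSupport base := by
      refine HasCompactSupport.intro (isCompact_closedBall (0:EuclideanSpace ℝ (Fin n)) c₂) ?_
      intro x hx
      rw [Metric.mem_closedBall, dist_zero_right] at hx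
      push_neg at hx
      rw [hbase_def]
      simp only
      rw [max_eq_right (by linarith)]
    have hbase_int : Integrable base := hbase_cont.integrable_of_hasCompactSupport hbase_cs
    have hIb : 0 < ∫ x, base x := by
      refine (integral_pos_iff_support_of_nonneg (fun x => hbase_nn x) hbase_int).2 ?_
      have hsub : Metric.ball (0:EuclideanSpace ℝ (Fin n)) c₂ ⊆ Function.support base := by
        intro x hx
        rw [Metric.mem_ball, dist_zero_right] at hx
        rw [Function.mem_support, hbase_def]
        simp only
        intro hEq
        rw [max_def] at hEq
        split_ifs at hEq with hcase
        · linarith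
        · linarith
      exact lt_of_lt_of_le (Metric.measure_ball_pos volume 0 hc₂) (measure_mono hsub)
    set Ib : ℝ := ∫ x, base x with hIb_def
    set ρ : EuclideanSpace ℝ (Fin n) → ℝ := fun x => base x / Ib with hρ_def
    have hρ_cont : Continuous ρ := hbase_cont.div_const Ib
    have hρ_cs : HasCompactSupport ρ := by
      refine HasCompactSupport.intro (isCompact_closedBall (0:EuclideanSpace ℝ (Fin n)) c₂) ?_
      intro x hx
      rw [Metric.mem_closedBall, dist_zero_right] at hx
      push_neg at hx
      rw [hρ_def]
      simp only
      rw [hbase_def]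
      simp only
      rw [max_eq_right (by linarith), zero_div]
    have hρ0 : ∀ x, 0 ≤ ρ x := fun x => div_nonneg (hbase_nn x) hIb.le
    have hρ1 : ∫ s, ρ s = 1 := by
      rw [hρ_def]
      rw [integral_div]
      exact div_self hIb.ne'
    have hρsupp : ∀ s, ρ s ≠ 0 → ‖s‖ ≤ c₂ := by
      intro s hs
      by_contra hcon
      push_neg at hcon
      refine hs ?_
      rw [hρ_def]
      simp only
      rw [hbase_def]
      simp only
      rw [max_eq_right (by linarith), zero_div]
    have hρbd : ∀ s, |ρ s| ≤ c₂ / Ib := by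
      intro s
      rw [hρ_def]
      simp only
      rw [abs_div, abs_of_pos hIb, abs_of_nonneg (hbase_nn s)]
      refine (div_le_div_iff_of_pos_right hIb).2 ?_
      rw [hbase_def]
      simp only
      exact max_le (by linarith [norm_nonneg s]) hc₂.le
    have hρlip : ∀ a b, |ρ a - ρ b| ≤ Ib⁻¹ * ‖a - b‖ := by
      intro a b
      rw [hρ_def]
      simp only
      rw [div_sub_div_same, abs_div, abs_of_pos hIb]
      have h1 : |base a - base b| ≤ ‖a - b‖ := by
        rw [hbase_def]
        simp only
        refine (abs_max_sub_max_le_abs _ _ _).trans ?_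
        rw [sub_sub_sub_cancel_left]
        exact (abs_norm_sub_norm_le b a).trans (by rw [norm_sub_rev])
      calc |base a - base b| / Ib ≤ ‖a - b‖ / Ib := (div_le_div_iff_of_pos_right hIb).2 h1
        _ = Ib⁻¹ * ‖a - b‖ := by rw [div_eq_inv_mul]
    -- convolved family
    set hh : ℕ → EuclideanSpace ℝ (Fin n) → ℝ := fun ν => AUXconv (g ν) ρ with hhh_def
    set Cfam : ℝ := (c₂ / Ib) * G1 with hCfam_def
    set Lfam : ℝ := Ib⁻¹ * G1 with hLfam_def
    have hLfam0 : 0 ≤ Lfam := mul_nonneg (inv_nonneg.2 hIb.le) hG10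
    have hCfam0 : 0 ≤ Cfam := mul_nonneg (div_nonneg hc₂.le hIb.le) hG10
    have hhbd : ∀ ν x, |hh ν x| ≤ Cfam := by
      intro ν x
      refine (AUXconv_bound (hgint ν) hρ_cont hρbd x).trans ?_
      rw [hCfam_def]
      exact mul_le_mul_of_nonneg_left (hgL1 ν) (div_nonneg hc₂.le hIb.le)
    have hhlip : ∀ ν x y, |hh ν x - hh ν y| ≤ Lfam * ‖x - y‖ := by
      intro ν x y
      refine (AUXconv_lip (hgint ν) hρ_cont hρbd hρlip (inv_nonneg.2 hIb.le) x y).trans ?_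
      refine mul_le_mul_of_nonneg_right ?_ (norm_nonneg _)
      rw [hLfam_def]
      exact mul_le_mul_of_nonneg_left (hgL1 ν) (inv_nonneg.2 hIb.le)
    have hh_cont : ∀ ν, Continuous (hh ν) := by
      intro ν
      have hlw : LipschitzWith (Real.toNNReal Lfam) (hh ν) := by
        refine LipschitzWith.of_dist_le_mul fun x y => ?_
        rw [Real.coe_toNNReal _ hLfam0, Real.dist_eq, dist_eq_norm]
        exact hhlip ν x y
      exact hlw.continuous
    -- approximation bound
    have happrox : ∀ ν, eLpNorm (fun x => hh ν x - g ν x) q volume ≤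
        ENNReal.ofReal c₂ * (ENNReal.ofReal CD * A) := by
      intro ν
      have h1 := AUXapprox hpq hc₂.le (hgC1 ν) (hgcs ν) hρ_cont hρ_cs hρ0 hρ1 hρsupp
      have h2 : eLpNorm (fun x => hh ν x - g ν x) q volume ≤
          ENNReal.ofReal c₂ * eLpNorm (fun x => fderiv ℝ (g ν) x) q volume := by
        rw [hq_def]
        exact AUXelp hp0 h1
      exact h2.trans (mul_le_mul_right (hDgA ν) _)
    -- choice of δ and the finite net
    set Vb : ℝ≥0∞ := (volume Sᶜ) ^ p⁻¹ with hVb_def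
    have hSsub : Sᶜ ⊆ Metric.closedBall (0:EuclideanSpace ℝ (Fin n)) R := by
      intro x hx
      rw [Metric.mem_closedBall, dist_zero_right]
      exact ((hScompl x).1 hx).le
    have hScvol : volume Sᶜ < ⊤ :=
      lt_of_le_of_lt (measure_mono hSsub) measure_closedBall_lt_top
    have hVbfin : Vb ≠ ⊤ := ENNReal.rpow_ne_top_of_nonneg (by positivity) hScvol.ne
    set Vbt : ℝ := Vb.toReal with hVbt_def
    have hVbt0 : 0 ≤ Vbt := ENNReal.toReal_nonneg
    have hVbA : Vb = ENNReal.ofReal Vbt := (ENNReal.ofReal_toReal hVbfin).symm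
    set δ : ℝ := c / ((CM + 1) * (Vbt + 1)) with hδ_def
    have hDen2 : 0 < (CM + 1) * (Vbt + 1) := by nlinarith
    have hδ0 : 0 < δ := div_pos hc0 hDen2
    obtain ⟨F, hF⟩ := AUXnet (Metric.closedBall (0:EuclideanSpace ℝ (Fin n)) R)
      (isCompact_closedBall _ _) hh hLfam0 hhlip hhbd hδ0
    -- centers
    set Wt : ℕ → EuclideanSpace ℝ (Fin n) → ℝ :=
      fun j => Sᶜ.indicator (fun x => w x * (f x * hh j x)) with hWt_def
    have hWtsm : ∀ j, AEStronglyMeasurable (Wt j) volume := fun j =>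
      AEStronglyMeasurable.indicator
        ((hw_cont.measurable.mul (hfmeas.mul
          (hh_cont j).measurable)).stronglyMeasurable).aestronglyMeasurable hSmeas.compl
    have hwle : ∀ x : EuclideanSpace ℝ (Fin n), x ∈ Sᶜ → w x ≤ C₁ :=
      fun x hx => hC₁w x ((hScompl x).1 hx).le
    have hWtmem : ∀ j, MemLp (Wt j) q volume := by
      intro j
      refine ⟨hWtsm j, ?_⟩
      rw [hWt_def]
      rw [eLpNorm_indicator_eq_eLpNorm_restrict hSmeas.compl]
      have hbd : ∀ᵐ x ∂(volume.restrict Sᶜ), ‖w x * (f x * hh j x)‖ ≤ C₁ * (M * Cfam) := by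
        refine (ae_restrict_iff' hSmeas.compl).2 (Filter.Eventually.of_forall fun x hx => ?_)
        rw [Real.norm_eq_abs, abs_mul, abs_mul, abs_of_pos (hw_pos x)]
        refine mul_le_mul (hwle x hx) (mul_le_mul (hM x) (hhbd j x) (abs_nonneg _) hM0)
          (by positivity) hC₁0.le
      refine lt_of_le_of_lt (eLpNorm_le_of_ae_bound hbd) ?_
      rw [Measure.restrict_apply_univ]
      exact ENNReal.mul_lt_top
        (ENNReal.rpow_lt_top_of_nonneg (by positivity) hScvol.ne) ENNReal.ofReal_lt_top
    -- the finite cover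
    refine ⟨(fun j => (hWtmem j).toLp (Wt j)) '' ↑F, F.finite_toSet.image _, ?_⟩
    rintro x ⟨ν, rfl⟩
    obtain ⟨j, hjF, hj⟩ := hF ν
    refine Set.mem_iUnion₂.2 ⟨(hWtmem j).toLp (Wt j), Set.mem_image_of_mem _ hjF, ?_⟩
    rw [EMetric.mem_ball]
    have hedist : edist (T ν) ((hWtmem j).toLp (Wt j)) =
        eLpNorm (fun x => W ν x - Wt j x) q volume := by
      rw [Lp.edist_def]
      refine eLpNorm_congr_ae ?_
      filter_upwards [(hmem ν).coeFn_toLp, (hWtmem j).coeFn_toLp] with x h1 h2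
      simp only [hT_def]
      simp only [Pi.sub_apply, h1, h2]
    -- decomposition into three pieces
    have hdecomp : (fun x => W ν x - Wt j x) = (fun x => S.indicator (W ν) x +
        (Sᶜ.indicator (fun y => w y * (f y * (g ν y - hh ν y))) x +
         Sᶜ.indicator (fun y => w y * (f y * (hh ν y - hh j y))) x)) := by
      funext x
      by_cases hx : x ∈ S
      · have hx' : x ∉ Sᶜ := by simpa using hx
        rw [hWt_def]
        simp only [Set.indicator_of_mem hx, Set.indicator_of_notMem hx']
        ring
      · have hx' : x ∈ Sᶜ := hx
        have hxR : ‖x‖ < R := (hScompl x).1 hx'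
        have hgux : g ν x = us ν x := hgu ν x (by linarith)
        rw [hWt_def]
        simp only [Set.indicator_of_notMem hx, Set.indicator_of_mem hx', hW_def]
        rw [← hgux]
        ring
    -- piece 2 bound
    have hb2 : eLpNorm (fun x => Sᶜ.indicator (fun y => w y * (f y * (g ν y - hh ν y))) x)
        q volume ≤ ENNReal.ofReal c := by
      have hptw : ∀ x, ‖Sᶜ.indicator (fun y => w y * (f y * (g ν y - hh ν y))) x‖ ≤
          CM * ‖hh ν x - g ν x‖ := by
        intro x
        by_cases hx : x ∈ Sᶜ
        · rw [Set.indicator_of_mem hx, Real.norm_eq_abs, Real.norm_eq_abs,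
            abs_mul, abs_mul, abs_of_pos (hw_pos x), abs_sub_comm, hCM_def]
          rw [mul_assoc]
          refine mul_le_mul (hwle x hx) ?_ (by positivity) hC₁0.le
          exact mul_le_mul_of_nonneg_right (hM x) (abs_nonneg _)
        · rw [Set.indicator_of_notMem hx]
          simp only [norm_zero]
          positivity
      refine le_trans (AUXmono hCM0 hptw q) ?_
      refine le_trans (mul_le_mul_right (happrox ν) _) ?_
      have hreal : CM * (c₂ * (CD * At)) ≤ c := by
        have hprod : CM * (CD * At) ≤ (CM+1) * (CD+1) * (At+1) := by nlinarith
        have h2 : c₂ * ((CM+1) * (CD+1) * (At+1)) = c := div_mul_cancel₀ _ hDen.ne'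
        calc CM * (c₂ * (CD*At)) = c₂ * (CM * (CD*At)) := by ring
          _ ≤ c₂ * ((CM+1)*(CD+1)*(At+1)) := mul_le_mul_of_nonneg_left hprod hc₂.le
          _ = c := h2
      calc ENNReal.ofReal CM * (ENNReal.ofReal c₂ * (ENNReal.ofReal CD * A))
          = ENNReal.ofReal CM * (ENNReal.ofReal c₂ *
            (ENNReal.ofReal CD * ENNReal.ofReal At)) := by rw [← hAA]
        _ = ENNReal.ofReal (CM * (c₂ * (CD * At))) := by
            rw [← ENNReal.ofReal_mul hCD0, ← ENNReal.ofReal_mul hc₂.le,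
              ← ENNReal.ofReal_mul hCM0]
        _ ≤ ENNReal.ofReal c := ENNReal.ofReal_le_ofReal hreal
    -- piece 3 bound
    have hb3 : eLpNorm (fun x => Sᶜ.indicator (fun y => w y * (f y * (hh ν y - hh j y))) x)
        q volume ≤ ENNReal.ofReal c := by
      have heq : (fun x => Sᶜ.indicator (fun y => w y * (f y * (hh ν y - hh j y))) x)
          = Sᶜ.indicator (fun y => w y * (f y * (hh ν y - hh j y))) := rfl
      rw [heq, eLpNorm_indicator_eq_eLpNorm_restrict hSmeas.compl]
      have hbd : ∀ᵐ x ∂(volume.restrict Sᶜ),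
          ‖w x * (f x * (hh ν x - hh j x))‖ ≤ CM * δ := by
        refine (ae_restrict_iff' hSmeas.compl).2 (Filter.Eventually.of_forall fun x hx => ?_)
        have hxball : x ∈ Metric.closedBall (0:EuclideanSpace ℝ (Fin n)) R := hSsub hx
        rw [Real.norm_eq_abs, abs_mul, abs_mul, abs_of_pos (hw_pos x), hCM_def, mul_assoc]
        refine mul_le_mul (hwle x hx) ?_ (by positivity) hC₁0.le
        exact mul_le_mul (hM x) (hj x hxball) (abs_nonneg _) hM0
      refine le_trans (eLpNorm_le_of_ae_bound hbd) ?_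
      rw [Measure.restrict_apply_univ, hqt]
      have hreal : Vbt * (CM * δ) ≤ c := by
        have hprod : Vbt * CM ≤ (CM+1) * (Vbt+1) := by nlinarith
        have h2 : δ * ((CM+1) * (Vbt+1)) = c := div_mul_cancel₀ _ hDen2.ne'
        calc Vbt * (CM * δ) = δ * (Vbt * CM) := by ring
          _ ≤ δ * ((CM+1)*(Vbt+1)) := mul_le_mul_of_nonneg_left hprod hδ0.le
          _ = c := h2
      calc (volume Sᶜ) ^ p⁻¹ * ENNReal.ofReal (CM * δ)
          = ENNReal.ofReal Vbt * ENNReal.ofReal (CM * δ) := by rw [← hVbA, hVb_def]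
        _ = ENNReal.ofReal (Vbt * (CM * δ)) := by rw [← ENNReal.ofReal_mul hVbt0]
        _ ≤ ENNReal.ofReal c := ENNReal.ofReal_le_ofReal hreal
    -- combine
    have hm2' : AEStronglyMeasurable
        (fun x => Sᶜ.indicator (fun y => w y * (f y * (g ν y - hh ν y))) x) volume :=
      AEStronglyMeasurable.indicator
        ((hw_cont.measurable.mul (hfmeas.mul ((hgC1 ν).continuous.sub
          (hh_cont ν)).measurable)).stronglyMeasurable).aestronglyMeasurable hSmeas.compl
    have hm3' : AEStronglyMeasurable
        (fun x => Sᶜ.indicator (fun y => w y * (f y * (hh ν y - hh j y))) x) volume :=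
      AEStronglyMeasurable.indicator
        ((hw_cont.measurable.mul (hfmeas.mul ((hh_cont ν).sub
          (hh_cont j)).measurable)).stronglyMeasurable).aestronglyMeasurable hSmeas.compl
    have hm1' : AEStronglyMeasurable (fun x => S.indicator (W ν) x) volume :=
      AEStronglyMeasurable.indicator (hWsm ν) hSmeas
    calc edist (T ν) ((hWtmem j).toLp (Wt j))
        = eLpNorm (fun x => W ν x - Wt j x) q volume := hedist
      _ ≤ ENNReal.ofReal c + (ENNReal.ofReal c + ENNReal.ofReal c) := by
          rw [hdecomp]
          refine le_trans (eLpNorm_add_le hm1' (hm2'.add hm3') hq1) ?_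
          refine add_le_add (htail ν) ?_
          refine le_trans (eLpNorm_add_le hm2' hm3' hq1) ?_
          exact add_le_add hb2 hb3
      _ ≤ ENNReal.ofReal (4 * c) := by
          rw [← ENNReal.ofReal_add hc0.le (by positivity), ← ENNReal.ofReal_add hc0.le
            (by positivity)]
          refine ENNReal.ofReal_le_ofReal (by linarith)
      _ < ε := hcε
  -- endgame: extract a convergent subsequence
  have hcompact : IsCompact (closure (Set.range T)) :=
    hTB.closure.isCompact_of_isClosed isClosed_closure
  obtain ⟨V, hVmem, φ, hφmono, hφtend⟩ :=
    hcompact.tendsto_subseq (fun ν => subset_closure (Set.mem_range_self ν))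
  set V' : EuclideanSpace ℝ (Fin n) → ℝ := (Lp.aestronglyMeasurable V).mk ↑V with hV'_def
  have hV'meas : Measurable V' := (Lp.aestronglyMeasurable V).stronglyMeasurable_mk.measurable
  have hV'ae : ⇑V =ᵐ[volume] V' := (Lp.aestronglyMeasurable V).ae_eq_mk
  refine ⟨φ, hφmono, fun x => V' x / w x, hV'meas.div hw_cont.measurable, ?_, ?_⟩
  · have heq : (fun x => w x * (V' x / w x)) = V' := by
      funext x
      rw [mul_comm, div_mul_cancel₀ _ (hw_pos x).ne']
    rw [heq]
    calc eLpNorm V' q volume = eLpNorm (⇑V) q volume := eLpNorm_congr_ae hV'ae.symm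
      _ < ⊤ := Lp.eLpNorm_lt_top V
  · have hfun : ∀ j, eLpNorm (fun x => w x * (f x * us (φ j) x - V' x / w x)) q volume
        = edist (T (φ j)) V := by
      intro j
      rw [Lp.edist_def]
      refine (eLpNorm_congr_ae ?_).symm
      filter_upwards [(hmem (φ j)).coeFn_toLp, hV'ae] with x h1 h2
      have h1' : (T (φ j) : EuclideanSpace ℝ (Fin n) → ℝ) x = W (φ j) x := h1
      simp only [Pi.sub_apply, h1', h2, hW_def]
      have hcancel : w x * (V' x / w x) = V' x := by
        rw [mul_comm, div_mul_cancel₀ _ (hw_pos x).ne']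
      rw [mul_sub, hcancel]
    rw [show (fun j => eLpNorm (fun x => w x * (f x * us (φ j) x - V' x / w x)) q volume)
      = (fun j => edist (T (φ j)) V) from funext hfun]
    have h1 : Filter.Tendsto (fun j => edist ((T ∘ φ) j) V) Filter.atTop (nhds (edist V V)) :=
      hφtend.edist tendsto_const_nhds
    simpa [edist_self] using h1
end
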